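/- arXiv:2605.15928 — 6 statements merged into one kernel-verified Lean document; each statement's English description precedes it below -/
import Mathlib

section
/- Let ℓ∞(ℂ) be the complex Banach space of bounded complex sequences with the supremum norm, let S ⊆ ℓ∞(ℝ) be a nonempty set of bounded real sequences, and for h > 0 let O_h = {z ∈ ℓ∞(ℂ) : ∃ s ∈ S with |z − s|_∞ < h}. Suppose f : O_h → ℓ∞(ℂ) is holomorphic, maps real sequences in O_h to real sequences, and satisfies sup_{z ∈ O_h} |f(z) − z|_∞ ≤ δ for some δ with 0 < δ ≤ h/4. Then there exists a holomorphic map φ : O_{h/4} → O_h such that: (i) f(φ(z)) = z for every z ∈ O_{h/4}; (ii) |φ(z) − z|_∞ ≤ δ for every z ∈ O_{h/4}; (iii) φ maps real sequences to real sequences; and (iv) for each z ∈ O_{h/4}, φ(z) is the unique point w with |w − z|_∞ ≤ h/4 and f(w) = z. -/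
/-!
STATEMENT 2 (inverse function lemma, Lemma D.1 of Pöschel):
On O_h = {z ∈ ℓ∞(ℂ) : ∃ s ∈ S, |z − s|_∞ < h} (S a set of bounded real sequences),
a holomorphic, reality-preserving map f with sup_{O_h} |f − id|_∞ ≤ δ ≤ h/4 has a
holomorphic, reality-preserving right inverse φ : O_{h/4} → O_h with |φ − id|_∞ ≤ δ,
and φ(z) is the unique preimage of z within distance h/4 of z.
-/

noncomputable section

/-- The complex Banach space ℓ∞ of bounded complex sequences with the sup norm. -/
abbrev LinfC := lp (fun _ : ℕ => ℂ) ⊤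

/-- `z` is a real sequence. -/
def IsRealSeq (z : LinfC) : Prop := ∀ n : ℕ, (z n).im = 0

/-- The complex neighbourhood of radius `h` of the set `S` of real sequences. -/
def Oset (S : Set LinfC) (h : ℝ) : Set LinfC := {z | ∃ s ∈ S, ‖z - s‖ < h}

/-!
Write `f = id + g`. Since `‖g‖ ≤ δ` on `O_h`, Cauchy's estimate along complex lines bounds
`‖Dg‖` by `δ / (h / 2) ≤ 1 / 2` on every ball `B(s, h / 2)`, `s ∈ S`, so `g` is `1/2`-Lipschitz
there. For `z ∈ B(s, h / 4)` the map `w ↦ z - g w` is then a contraction of the closed ball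
`B̄(z, δ) ⊆ B(s, h / 2)`, and of its real points when `z` is real; its fixed point is `φ z`.
The Lipschitz bound gives `‖w - w'‖ ≤ 2 ‖f w - f w'‖`, hence uniqueness of the preimage and
continuity of `φ`, and `φ` is holomorphic because `Df = 1 + Dg` is invertible.
-/

open Metric Set Filter Topology

theorem norm_fderiv_le_of_forall_mem_closedBall_norm_le {E F : Type*} [NormedAddCommGroup E]
    [NormedSpace ℂ E] [NormedAddCommGroup F] [NormedSpace ℂ F] {g : E → F} {c : E} {R C : ℝ}
    (hR : 0 < R) (hd : DiffContOnCl ℂ g (ball c R)) (hC : ∀ w ∈ closedBall c R, ‖g w‖ ≤ C) :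
    ‖fderiv ℂ g c‖ ≤ C / R := by
  have hC0 : 0 ≤ C := (norm_nonneg _).trans (hC c (mem_closedBall_self hR.le))
  refine ContinuousLinearMap.opNorm_le_bound _ (by positivity) fun v => ?_
  rcases eq_or_ne v 0 with rfl | hv
  · simp
  have hv0 : 0 < ‖v‖ := norm_pos_iff.mpr hv
  set line : ℂ → E := fun t => c + t • v
  have hline : ∀ t, HasDerivAt line v t := fun t => by
    simpa [line] using ((hasDerivAt_id t).smul_const v).const_add c
  have hmaps : MapsTo line (ball 0 (R / ‖v‖)) (ball c R) := fun t ht => by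
    rw [mem_ball_zero_iff, lt_div_iff₀ hv0] at ht
    simpa [line, mem_ball_iff_norm, norm_smul] using ht
  have hmaps' : MapsTo line (closedBall 0 (R / ‖v‖)) (closedBall c R) := fun t ht => by
    rw [mem_closedBall_zero_iff, le_div_iff₀ hv0] at ht
    simpa [line, mem_closedBall_iff_norm, norm_smul] using ht
  have hdisc : DiffContOnCl ℂ (g ∘ line) (ball 0 (R / ‖v‖)) :=
    hd.comp (Differentiable.diffContOnCl fun t => (hline t).differentiableAt) hmaps
  have hderiv : HasDerivAt (g ∘ line) (fderiv ℂ g c v) 0 := by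
    have hg : HasFDerivAt g (fderiv ℂ g c) (line 0) := by
      simpa [line] using (hd.differentiableAt isOpen_ball (mem_ball_self hR)).hasFDerivAt
    exact hg.comp_hasDerivAt 0 (hline 0)
  calc ‖fderiv ℂ g c v‖ = ‖deriv (g ∘ line) 0‖ := by rw [hderiv.deriv]
    _ ≤ C / (R / ‖v‖) := Complex.norm_deriv_le_of_forall_mem_sphere_norm_le (by positivity) hdisc
        fun t ht => hC _ (hmaps' (sphere_subset_closedBall ht))
    _ = C / R * ‖v‖ := by field_simp

theorem norm_sub_le_two_mul_norm_apply_sub {E : Type*} [SeminormedAddCommGroup E] {f : E → E}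
    {t : Set E} (hf : LipschitzOnWith (1 / 2) (fun w => f w - w) t) {w w' : E} (hw : w ∈ t)
    (hw' : w' ∈ t) : ‖w - w'‖ ≤ 2 * ‖f w - f w'‖ := by
  have hlip : ‖(f w - w) - (f w' - w')‖ ≤ 1 / 2 * ‖w - w'‖ := by
    simpa using hf.norm_sub_le hw hw'
  have : ‖w - w'‖ ≤ ‖f w - f w'‖ + ‖(f w - w) - (f w' - w')‖ := calc
    ‖w - w'‖ = ‖(f w - f w') - ((f w - w) - (f w' - w'))‖ := by congr 1; abel
    _ ≤ _ := norm_sub_le _ _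
  linarith

section PerturbationOfIdentity

variable {E : Type*} [NormedAddCommGroup E]

/-- Junk (an arbitrary point) when `z` has no preimage under `f` within distance `δ`. -/
def localInverse (f : E → E) (δ : ℝ) (z : E) : E :=
  Classical.epsilon fun w => w ∈ closedBall z δ ∧ f w = z

variable [NormedSpace ℂ E] {f : E → E} {s z : E} {h δ : ℝ}
  (hf : DifferentiableOn ℂ f (ball s h)) (hclose : ∀ w ∈ ball s h, ‖f w - w‖ ≤ δ)
  (hδ : δ ≤ h / 4)
include hf hclose hδ

theorem norm_fderiv_sub_id_le {u : E} (hu : u ∈ ball s (h / 2)) :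
    ‖fderiv ℂ (fun w => f w - w) u‖ ≤ 1 / 2 := by
  have hh : 0 < h := by linarith [pos_of_mem_ball hu]
  have hsub : closedBall u (h / 2) ⊆ ball s h := fun w hw => by
    rw [mem_ball, mem_closedBall] at *
    linarith [dist_triangle w u s]
  calc ‖fderiv ℂ (fun w => f w - w) u‖ ≤ δ / (h / 2) :=
        norm_fderiv_le_of_forall_mem_closedBall_norm_le (by positivity)
          ((hf.sub differentiableOn_id).diffContOnCl_ball hsub) fun w hw => hclose w (hsub hw)
    _ ≤ 1 / 2 := by rw [div_le_iff₀ (by positivity)]; linarith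

theorem lipschitzOnWith_sub_id : LipschitzOnWith (1 / 2) (fun w => f w - w) (ball s (h / 2)) := by
  refine (convex_ball s (h / 2)).lipschitzOnWith_of_nnnorm_fderiv_le (𝕜 := ℂ) (fun u hu => ?_)
    fun u hu => ?_
  · exact (hf.sub differentiableOn_id).differentiableAt
      (isOpen_ball.mem_nhds (ball_subset_ball (by linarith [pos_of_mem_ball hu]) hu))
  · rw [← NNReal.coe_le_coe, coe_nnnorm]
    simpa using norm_fderiv_sub_id_le hf hclose hδ hu

variable [CompleteSpace E]

theorem exists_mem_closedBall_apply_eq (hz : z ∈ ball s (h / 4)) (C : AddSubgroup E)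
    (hC : IsClosed (C : Set E)) (hzC : z ∈ C) (hfC : ∀ w ∈ C, w ∈ ball s h → f w ∈ C) :
    ∃ w ∈ C, w ∈ closedBall z δ ∧ f w = z := by
  have hh : 0 < h := by linarith [pos_of_mem_ball hz]
  have hball : closedBall z δ ⊆ ball s (h / 2) := fun w hw => by
    rw [mem_ball, mem_closedBall] at *
    linarith [dist_triangle w z s]
  have hsub : ball s (h / 2) ⊆ ball s h := ball_subset_ball (by linarith)
  have hδ0 : 0 ≤ δ := (norm_nonneg _).trans (hclose z (ball_subset_ball (by linarith) hz))
  set K : Set E := C ∩ closedBall z δ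
  set T : E → E := fun w => z - (f w - w)
  have hT : MapsTo T K K := fun w ⟨hwC, hw⟩ => by
    refine ⟨C.sub_mem hzC (C.sub_mem (hfC w hwC (hsub (hball hw))) hwC), ?_⟩
    simpa [T, mem_closedBall, dist_eq_norm] using hclose w (hsub (hball hw))
  have hTlip : LipschitzOnWith (1 / 2) T K := by
    simpa [T] using ((LipschitzWith.const z).lipschitzOnWith.sub
      (lipschitzOnWith_sub_id hf hclose hδ)).mono (inter_subset_right.trans hball)
  obtain ⟨w, hwK, hwT, -⟩ := ContractingWith.exists_fixedPoint'
    (hC.inter isClosed_closedBall).isComplete hT ⟨by norm_num, hTlip.mapsToRestrict hT⟩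
    (⟨hzC, mem_closedBall_self hδ0⟩ : z ∈ K) (edist_ne_top _ _)
  refine ⟨w, hwK.1, hwK.2, ?_⟩
  have : z - (f w - w) = w := hwT
  rw [sub_sub_eq_add_sub, sub_eq_iff_eq_add, add_comm] at this
  exact (add_left_cancel this).symm

theorem localInverse_spec (hz : z ∈ ball s (h / 4)) :
    localInverse f δ z ∈ closedBall z δ ∧ f (localInverse f δ z) = z := by
  obtain ⟨w, -, hw⟩ := exists_mem_closedBall_apply_eq hf hclose hδ hz ⊤
    (by simp) trivial fun _ _ _ => trivial
  exact Classical.epsilon_spec (p := fun w => w ∈ closedBall z δ ∧ f w = z) ⟨w, hw⟩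

theorem localInverse_mem_ball (hz : z ∈ ball s (h / 4)) : localInverse f δ z ∈ ball s (h / 2) := by
  have := (localInverse_spec hf hclose hδ hz).1
  rw [mem_ball, mem_closedBall] at *
  linarith [dist_triangle (localInverse f δ z) z s]

theorem eq_localInverse (hz : z ∈ ball s (h / 4)) {w : E} (hw : w ∈ closedBall z (h / 4))
    (hfw : f w = z) : w = localInverse f δ z := by
  have hws : w ∈ ball s (h / 2) := by
    rw [mem_ball, mem_closedBall] at *
    linarith [dist_triangle w z s]
  have := norm_sub_le_two_mul_norm_apply_sub (lipschitzOnWith_sub_id hf hclose hδ) hws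
    (localInverse_mem_ball hf hclose hδ hz)
  rw [hfw, (localInverse_spec hf hclose hδ hz).2, sub_self, norm_zero, mul_zero] at this
  exact sub_eq_zero.mp (norm_le_zero_iff.mp this)

theorem localInverse_mem (hz : z ∈ ball s (h / 4)) (C : AddSubgroup E) (hC : IsClosed (C : Set E))
    (hzC : z ∈ C) (hfC : ∀ w ∈ C, w ∈ ball s h → f w ∈ C) : localInverse f δ z ∈ C := by
  obtain ⟨w, hwC, hw, hfw⟩ := exists_mem_closedBall_apply_eq hf hclose hδ hz C hC hzC hfC
  rwa [← eq_localInverse hf hclose hδ hz (closedBall_subset_closedBall hδ hw) hfw]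

theorem lipschitzOnWith_localInverse : LipschitzOnWith 2 (localInverse f δ) (ball s (h / 4)) := by
  refine LipschitzOnWith.of_dist_le_mul fun y hy y' hy' => ?_
  have := norm_sub_le_two_mul_norm_apply_sub (lipschitzOnWith_sub_id hf hclose hδ)
    (localInverse_mem_ball hf hclose hδ hy) (localInverse_mem_ball hf hclose hδ hy')
  rwa [(localInverse_spec hf hclose hδ hy).2, (localInverse_spec hf hclose hδ hy').2,
    ← dist_eq_norm, ← dist_eq_norm] at this

theorem differentiableAt_localInverse (hz : z ∈ ball s (h / 4)) :
    DifferentiableAt ℂ (localInverse f δ) z := by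
  set w := localInverse f δ z
  have hw := localInverse_mem_ball hf hclose hδ hz
  have hfw : DifferentiableAt ℂ f w := hf.differentiableAt
    (isOpen_ball.mem_nhds (ball_subset_ball (by linarith [pos_of_mem_ball hw]) hw))
  have hunit : IsUnit (fderiv ℂ f w) := by
    have hsplit : fderiv ℂ f w = 1 - -fderiv ℂ (fun w => f w - w) w := by
      rw [sub_neg_eq_add, fderiv_fun_sub hfw differentiableAt_fun_id, fderiv_fun_id,
        ContinuousLinearMap.one_def, add_sub_cancel]
    rw [hsplit]
    refine isUnit_one_sub_of_norm_lt_one ?_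
    rw [norm_neg]
    linarith [norm_fderiv_sub_id_le hf hclose hδ hw]
  have hcont : ContinuousAt (localInverse f δ) z :=
    (lipschitzOnWith_localInverse hf hclose hδ).continuousOn.continuousAt (isOpen_ball.mem_nhds hz)
  have hright : ∀ᶠ y in 𝓝 z, f (localInverse f δ y) = y :=
    eventually_of_mem (isOpen_ball.mem_nhds hz) fun y hy => (localInverse_spec hf hclose hδ hy).2
  exact (HasFDerivAt.of_local_left_inverse (f' := .ofUnit hunit.unit) hcont hfw.hasFDerivAt
    hright).differentiableAt

end PerturbationOfIdentity

def realSeqSubgroup : AddSubgroup LinfC where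
  carrier := {z | IsRealSeq z}
  zero_mem' _ := rfl
  add_mem' hz hw n := by simp [hz n, hw n]
  neg_mem' hz n := by simp [hz n]

theorem isClosed_realSeqSubgroup : IsClosed (realSeqSubgroup : Set LinfC) := by
  change IsClosed {z : LinfC | ∀ n, (z n).im = 0}
  rw [ofPred_forall]
  exact isClosed_iInter fun n => isClosed_eq
    (Complex.continuous_im.comp (lp.lipschitzWith_one_eval ⊤ n).continuous) continuous_const

theorem ball_subset_Oset {S : Set LinfC} {s : LinfC} (hs : s ∈ S) (r : ℝ) :
    ball s r ⊆ Oset S r :=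
  fun _ hz => ⟨s, hs, mem_ball_iff_norm.mp hz⟩

theorem inverse_map_lemma_general
    (S : Set LinfC)
    (h δ : ℝ) (hδ : δ ≤ h / 4)
    (f : LinfC → LinfC)
    (hf_hol : ∀ z ∈ Oset S h, DifferentiableAt ℂ f z)
    (hf_real : ∀ z ∈ Oset S h, IsRealSeq z → IsRealSeq (f z))
    (hf_close : ∀ z ∈ Oset S h, ‖f z - z‖ ≤ δ) :
    ∃ φ : LinfC → LinfC,
      (∀ z ∈ Oset S (h / 4), DifferentiableAt ℂ φ z) ∧
      (∀ z ∈ Oset S (h / 4), φ z ∈ Oset S h) ∧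
      -- (i) right inverse
      (∀ z ∈ Oset S (h / 4), f (φ z) = z) ∧
      -- (ii) closeness to the identity
      (∀ z ∈ Oset S (h / 4), ‖φ z - z‖ ≤ δ) ∧
      -- (iii) reality preservation
      (∀ z ∈ Oset S (h / 4), IsRealSeq z → IsRealSeq (φ z)) ∧
      -- (iv) local uniqueness of the preimage
      (∀ z ∈ Oset S (h / 4), ∀ w : LinfC, ‖w - z‖ ≤ h / 4 → f w = z → w = φ z) := by
  have hlocal : ∀ s ∈ S, DifferentiableOn ℂ f (ball s h) ∧ ∀ w ∈ ball s h, ‖f w - w‖ ≤ δ :=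
    fun s hs => ⟨fun w hw => (hf_hol w (ball_subset_Oset hs h hw)).differentiableWithinAt,
      fun w hw => hf_close w (ball_subset_Oset hs h hw)⟩
  refine ⟨localInverse f δ, ?_, ?_, ?_, ?_, ?_, ?_⟩ <;> rintro z ⟨s, hs, hzs⟩
  all_goals
    obtain ⟨hf, hclose⟩ := hlocal s hs
    replace hzs : z ∈ ball s (h / 4) := mem_ball_iff_norm.mpr hzs
  · exact differentiableAt_localInverse hf hclose hδ hzs
  · exact ball_subset_Oset hs h (ball_subset_ball (by linarith [pos_of_mem_ball hzs])
      (localInverse_mem_ball hf hclose hδ hzs))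
  · exact (localInverse_spec hf hclose hδ hzs).2
  · exact mem_closedBall_iff_norm.mp (localInverse_spec hf hclose hδ hzs).1
  · exact fun hz => localInverse_mem hf hclose hδ hzs realSeqSubgroup isClosed_realSeqSubgroup hz
      fun w hw hws => hf_real w (ball_subset_Oset hs h hws) hw
  · exact fun w hw hfw => eq_localInverse hf hclose hδ hzs (mem_closedBall_iff_norm.mpr hw) hfw

theorem inverse_map_lemma
    (S : Set LinfC) (hS : S.Nonempty) (hSreal : ∀ s ∈ S, IsRealSeq s)
    (h δ : ℝ) (hh : 0 < h) (hδ0 : 0 < δ) (hδ : δ ≤ h / 4)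
    (f : LinfC → LinfC)
    (hf_hol : ∀ z ∈ Oset S h, DifferentiableAt ℂ f z)
    (hf_real : ∀ z ∈ Oset S h, IsRealSeq z → IsRealSeq (f z))
    (hf_close : ∀ z ∈ Oset S h, ‖f z - z‖ ≤ δ) :
    ∃ φ : LinfC → LinfC,
      (∀ z ∈ Oset S (h / 4), DifferentiableAt ℂ φ z) ∧
      (∀ z ∈ Oset S (h / 4), φ z ∈ Oset S h) ∧
      -- (i) right inverse
      (∀ z ∈ Oset S (h / 4), f (φ z) = z) ∧
      -- (ii) closeness to the identity
      (∀ z ∈ Oset S (h / 4), ‖φ z - z‖ ≤ δ) ∧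
      -- (iii) reality preservation
      (∀ z ∈ Oset S (h / 4), IsRealSeq z → IsRealSeq (φ z)) ∧
      -- (iv) local uniqueness of the preimage
      (∀ z ∈ Oset S (h / 4), ∀ w : LinfC, ‖w - z‖ ≤ h / 4 → f w = z → w = φ z) :=
  inverse_map_lemma_general S h δ hδ f hf_hol hf_real hf_close
end
end

section
/- Let β ∈ (0,1), 0 < μ < β, ρ > 0, σ > 0, 0 < ρ′ ≤ ρ, 0 < σ′ ≤ σ, L ≥ 1, and let 𝔸 be a collection of finite subsets of ℕ. Let P be a formal Hamiltonian with ‖P‖_{β,ρ,σ} < ∞. Define its truncation Q by Q^{[l]}_α = P^{[l]}_α whenever A(l,α)\{max A(l,α)} ∈ 𝔸, |l|₁ ≤ L and |α|₁ ≤ 1, and Q^{[l]}_α = 0 otherwise, and set R = P − Q. Then ‖R‖_{β−μ,ρ′,σ′} ≤ ( sup{ (m_A)^{μ} : A ⊆ ℕ finite, A ∉ 𝔸 } + (ρ′/ρ)² + e^{−L(σ−σ′)} ) · ‖P‖_{β,ρ,σ}, where the supremum is interpreted as 0 if 𝔸 contains every finite subset of ℕ. -/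
/-!
Common setting: mass sequences, formal Hamiltonians `h = (h^{[l]}_α)` indexed by
finitely supported `l : ℕ → ℤ`, `α : ℕ → ℕ`, the weighted norms `‖·‖_{β,ρ,σ}`, and
the (formal) Poisson bracket relative to the symplectic form `Σ_q m_q dJ_q ∧ dφ_q`.
-/

open scoped ENNReal NNReal BigOperators Classical

noncomputable section

/-- A mass sequence: non-increasing, with values in (0,1], and `m i ≤ M e^{-κ i}`. -/
structure IsMassSeq (κ M : ℝ) (m : ℕ → ℝ) : Prop where
  pos : ∀ i, 0 < m i
  le_one : ∀ i, m i ≤ 1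
  anti : Antitone m
  decay : ∀ i : ℕ, m i ≤ M * Real.exp (-κ * i)

/-- `m_A = ∏_{j∈A} m_j`. -/
def mProd (m : ℕ → ℝ) (A : Finset ℕ) : ℝ := ∏ i ∈ A, m i

/-- A formal Hamiltonian: the family of coefficients `h^{[l]}_α ∈ ℂ`.
(The coefficient at `(0,0)` is irrelevant: it is ignored by the norm.) -/
abbrev FormalHam := (ℕ →₀ ℤ) → (ℕ →₀ ℕ) → ℂ

/-- `A(l,α) = {j : l_j ≠ 0 or α_j ≠ 0}`. -/
def hSupp (l : ℕ →₀ ℤ) (α : ℕ →₀ ℕ) : Finset ℕ := l.support ∪ α.support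

/-- `|l|₁ = Σ_j |l_j|`. -/
def l1 (l : ℕ →₀ ℤ) : ℕ := l.sum fun _ v => v.natAbs

/-- `|α|₁ = Σ_j α_j`. -/
def a1 (α : ℕ →₀ ℕ) : ℕ := α.sum fun _ v => v

/-- Contribution of the monomial indexed by `p = (l,α)` to the `j`-th block of the norm:
`(m_{A(l,α)\{j}})^{-β} |h^{[l]}_α| ρ^{|α|₁} e^{σ|l|₁}` if `max A(l,α) = j`, else `0`. -/
def hamTerm (m : ℕ → ℝ) (β ρ σ : ℝ) (h : FormalHam) (j : ℕ)
    (p : (ℕ →₀ ℤ) × (ℕ →₀ ℕ)) : ℝ≥0∞ :=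
  if (hSupp p.1 p.2).max = (j : WithBot ℕ) then
    ENNReal.ofReal (mProd m ((hSupp p.1 p.2).erase j) ^ (-β) *
      ‖h p.1 p.2‖ * ρ ^ a1 p.2 * Real.exp (σ * (l1 p.1 : ℝ)))
  else 0

/-- The norm `‖h‖_{β,ρ,σ} = sup_j m_j^{-1} Σ_{max A(l,α) = j} (m_{A\{j}})^{-β} |h^{[l]}_α|
ρ^{|α|₁} e^{σ|l|₁}`, valued in `[0,∞]`. -/
def hamNorm (m : ℕ → ℝ) (β ρ σ : ℝ) (h : FormalHam) : ℝ≥0∞ :=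
  ⨆ j : ℕ, (ENNReal.ofReal (m j))⁻¹ *
    ∑' p : (ℕ →₀ ℤ) × (ℕ →₀ ℕ), hamTerm m β ρ σ h j p

/-- The family whose sum (over `x = (q, l', α')`) gives the `(l,α)`-coefficient of the
Poisson bracket `{h,g}` (up to the factor `i`):
`m_q^{-1} (l'_q α''_q − α'_q l''_q) h^{[l']}_{α'} g^{[l'']}_{α''}` where
`l'' = l − l'` and `α'' = α + 𝟙_q − α'` (the term being `0` unless `α' ≤ α + 𝟙_q`). -/
def bracketTerm (m : ℕ → ℝ) (h g : FormalHam) (l : ℕ →₀ ℤ) (α : ℕ →₀ ℕ)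
    (x : ℕ × (ℕ →₀ ℤ) × (ℕ →₀ ℕ)) : ℂ :=
  if x.2.2 ≤ α + Finsupp.single x.1 1 then
    ((m x.1 : ℂ))⁻¹ *
      ((x.2.1 x.1 : ℂ) * (((α + Finsupp.single x.1 1 - x.2.2 : ℕ →₀ ℕ) x.1 : ℕ) : ℂ) -
        ((x.2.2 x.1 : ℕ) : ℂ) * (((l - x.2.1 : ℕ →₀ ℤ) x.1 : ℤ) : ℂ)) *
      h x.2.1 x.2.2 * g (l - x.2.1) (α + Finsupp.single x.1 1 - x.2.2)
  else 0

/-- The Poisson bracket `{h,g}` of two formal Hamiltonians: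
`{h,g}^{[l]}_α = i Σ_{q} m_q^{-1} Σ_{l'+l''=l} Σ_{α'+α''=α+𝟙_q}
(l'_q α''_q − α'_q l''_q) h^{[l']}_{α'} g^{[l'']}_{α''}`. -/
def bracket (m : ℕ → ℝ) (h g : FormalHam) : FormalHam :=
  fun l α => Complex.I * ∑' x : ℕ × (ℕ →₀ ℤ) × (ℕ →₀ ℕ), bracketTerm m h g l α x

/-- `S_β = sup_q Σ_{n≥0} (m_{q+n}/m_q)^{1-β}`, valued in `[0,∞]`. -/
def Sbeta (m : ℕ → ℝ) (β : ℝ) : ℝ≥0∞ :=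
  ⨆ q : ℕ, ∑' n : ℕ, ENNReal.ofReal ((m (q + n) / m q) ^ (1 - β))

/-- `A̲ = A \ {max A}`. -/
def under (A : Finset ℕ) : Finset ℕ := A.filter fun j => ∃ i ∈ A, j < i
/-!
The estimate is termwise. At a monomial `(l, α)` with `max A(l,α) = j` the weight of
`‖·‖_{β−μ,ρ′,σ′}` is the weight of `‖·‖_{β,ρ,σ}` times
`(m_{A\{j}})^μ (ρ′/ρ)^{|α|₁} e^{−(σ−σ′)|l|₁}`, a product of three factors in `[0,1]`.
A coefficient survives in `R` only if `A\{j} ∉ 𝔸`, `|l|₁ > L` or `|α|₁ ≥ 2`, and then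
one of the factors is at most `sup_{A ∉ 𝔸} (m_A)^μ`, `e^{−L(σ−σ′)}` or `(ρ′/ρ)²` respectively.
-/

lemma mProd_pos {m : ℕ → ℝ} (hm : ∀ i, 0 < m i) (A : Finset ℕ) : 0 < mProd m A :=
  Finset.prod_pos fun i _ => hm i

lemma mProd_le_one {m : ℕ → ℝ} (hm₀ : ∀ i, 0 ≤ m i) (hm₁ : ∀ i, m i ≤ 1) (A : Finset ℕ) :
    mProd m A ≤ 1 :=
  Finset.prod_le_one (fun i _ => hm₀ i) fun i _ => hm₁ i

lemma under_eq_erase {A : Finset ℕ} {j : ℕ} (hj : A.max = (j : WithBot ℕ)) :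
    under A = A.erase j := by
  have hle : ∀ i ∈ A, i ≤ j := fun i hi => WithBot.coe_le_coe.1 ((Finset.le_max hi).trans_eq hj)
  ext x
  simp only [under, Finset.mem_filter, Finset.mem_erase]
  constructor
  · rintro ⟨hx, i, hi, hxi⟩
    exact ⟨(hxi.trans_le (hle i hi)).ne, hx⟩
  · rintro ⟨hxj, hx⟩
    exact ⟨hx, j, Finset.mem_of_max hj, (hle x hx).lt_of_ne hxj⟩

def hamWeight (m : ℕ → ℝ) (β ρ σ : ℝ) (j : ℕ) (l : ℕ →₀ ℤ) (α : ℕ →₀ ℕ) : ℝ :=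
  mProd m ((hSupp l α).erase j) ^ (-β) * ρ ^ a1 α * Real.exp (σ * l1 l)

lemma hamWeight_nonneg {m : ℕ → ℝ} (hm : ∀ i, 0 < m i) {β ρ σ : ℝ} (hρ : 0 ≤ ρ)
    (j : ℕ) (l : ℕ →₀ ℤ) (α : ℕ →₀ ℕ) : 0 ≤ hamWeight m β ρ σ j l α := by
  have := mProd_pos hm ((hSupp l α).erase j)
  unfold hamWeight
  positivity

lemma hamWeight_sub_eq {m : ℕ → ℝ} (hm : ∀ i, 0 < m i) {β μ ρ σ ρ' σ' : ℝ} (hρ : ρ ≠ 0)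
    (j : ℕ) (l : ℕ →₀ ℤ) (α : ℕ →₀ ℕ) :
    hamWeight m (β - μ) ρ' σ' j l α =
      mProd m ((hSupp l α).erase j) ^ μ * (ρ' / ρ) ^ a1 α * Real.exp (-l1 l * (σ - σ')) *
        hamWeight m β ρ σ j l α := by
  have hx := mProd_pos hm ((hSupp l α).erase j)
  simp only [hamWeight]
  rw [show -(β - μ) = μ + -β by ring, Real.rpow_add hx, div_pow,
    show σ' * l1 l = -l1 l * (σ - σ') + σ * l1 l by ring, Real.exp_add]
  field_simp

lemma hamTerm_le {m : ℕ → ℝ} {β ρ σ β' ρ' σ' C : ℝ} {g h : FormalHam} (hC : 0 ≤ C)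
    (hgh : ∀ l α (j : ℕ), (hSupp l α).max = (j : WithBot ℕ) →
      ‖g l α‖ * hamWeight m β' ρ' σ' j l α ≤ C * (‖h l α‖ * hamWeight m β ρ σ j l α))
    (j : ℕ) (p : (ℕ →₀ ℤ) × (ℕ →₀ ℕ)) :
    hamTerm m β' ρ' σ' g j p ≤ ENNReal.ofReal C * hamTerm m β ρ σ h j p := by
  unfold hamTerm
  split_ifs with hj
  · rw [← ENNReal.ofReal_mul hC]
    refine ENNReal.ofReal_le_ofReal ?_
    convert hgh p.1 p.2 j hj using 1 <;> simp only [hamWeight] <;> ring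
  · simp

lemma hamNorm_le_mul_of_hamTerm_le {m : ℕ → ℝ} {β ρ σ β' ρ' σ' : ℝ} {g h : FormalHam}
    {c : ℝ≥0∞} (hgh : ∀ j p, hamTerm m β' ρ' σ' g j p ≤ c * hamTerm m β ρ σ h j p) :
    hamNorm m β' ρ' σ' g ≤ c * hamNorm m β ρ σ h := by
  refine iSup_le fun j => ?_
  calc (ENNReal.ofReal (m j))⁻¹ * ∑' p, hamTerm m β' ρ' σ' g j p
      ≤ (ENNReal.ofReal (m j))⁻¹ * (c * ∑' p, hamTerm m β ρ σ h j p) := by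
        gcongr
        exact (ENNReal.tsum_le_tsum (hgh j)).trans_eq ENNReal.tsum_mul_left
    _ = c * ((ENNReal.ofReal (m j))⁻¹ * ∑' p, hamTerm m β ρ σ h j p) := mul_left_comm _ _ _
    _ ≤ c * hamNorm m β ρ σ h := by
        gcongr
        exact le_iSup (fun j => (ENNReal.ofReal (m j))⁻¹ * ∑' p, hamTerm m β ρ σ h j p) j

lemma mul_pow_mul_exp_le_add {a r s t S L : ℝ} {n : ℕ} (ha₀ : 0 ≤ a) (ha₁ : a ≤ 1)
    (hr₀ : 0 ≤ r) (hr₁ : r ≤ 1) (hs : 0 ≤ s) (ht : 0 ≤ t) (hS : 0 ≤ S)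
    (h : a ≤ S ∨ L < t ∨ 1 < n) :
    a * r ^ n * Real.exp (-t * s) ≤ S + r ^ 2 + Real.exp (-L * s) := by
  have hb₀ : 0 ≤ r ^ n := pow_nonneg hr₀ n
  have hb₁ : r ^ n ≤ 1 := pow_le_one₀ hr₀ hr₁
  have hc₁ : Real.exp (-t * s) ≤ 1 := Real.exp_le_one_iff.2 (by nlinarith)
  have hr2 : 0 ≤ r ^ 2 := sq_nonneg r
  have hexp : 0 ≤ Real.exp (-L * s) := (Real.exp_pos _).le
  rcases h with haS | hLt | hn
  · have : a * r ^ n * Real.exp (-t * s) ≤ a :=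
      mul_le_of_le_one_right (by positivity) hc₁ |>.trans (mul_le_of_le_one_right ha₀ hb₁)
    linarith
  · have : Real.exp (-t * s) ≤ Real.exp (-L * s) := Real.exp_le_exp.2 (by nlinarith)
    have : a * r ^ n * Real.exp (-t * s) ≤ Real.exp (-t * s) :=
      mul_le_of_le_one_left (by positivity) (mul_le_one₀ ha₁ hb₀ hb₁)
    linarith
  · have : r ^ n ≤ r ^ 2 := pow_le_pow_of_le_one hr₀ hr₁ hn
    have : a * r ^ n * Real.exp (-t * s) ≤ r ^ n :=
      mul_le_of_le_one_right (by positivity) hc₁ |>.trans (mul_le_of_le_one_left hb₀ ha₁)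
    linarith

theorem truncation_estimate_general
    (κ M : ℝ) (m : ℕ → ℝ) (hm : IsMassSeq κ M m)
    (β μ ρ σ ρ' σ' L : ℝ)
    (hμ0 : 0 < μ)
    (hρ'0 : 0 < ρ') (hρ' : ρ' ≤ ρ)
    (hσ' : σ' ≤ σ)
    (𝔸 : Set (Finset ℕ))
    (P : FormalHam)
    (Q R : FormalHam)
    (hQ : ∀ l α, Q l α =
      if under (hSupp l α) ∈ 𝔸 ∧ ((l1 l : ℕ) : ℝ) ≤ L ∧ a1 α ≤ 1 then P l α else 0)
    (hR : ∀ l α, R l α = P l α - Q l α) :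
    hamNorm m (β - μ) ρ' σ' R ≤
      ENNReal.ofReal
        (sSup ((fun A : Finset ℕ => mProd m A ^ μ) '' {A | A ∉ 𝔸}) +
          (ρ' / ρ) ^ 2 + Real.exp (-L * (σ - σ'))) *
        hamNorm m β ρ σ P := by
  have hρ : 0 < ρ := hρ'0.trans_le hρ'
  have hmμ₀ (A : Finset ℕ) : 0 ≤ mProd m A ^ μ := Real.rpow_nonneg (mProd_pos hm.pos A).le μ
  have hmμ₁ (A : Finset ℕ) : mProd m A ^ μ ≤ 1 :=
    Real.rpow_le_one (mProd_pos hm.pos A).le (mProd_le_one (hm.pos · |>.le) hm.le_one A) hμ0.le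
  set S := sSup ((fun A : Finset ℕ => mProd m A ^ μ) '' {A | A ∉ 𝔸})
  have hS₀ : 0 ≤ S := Real.sSup_nonneg (by rintro _ ⟨A, -, rfl⟩; exact hmμ₀ A)
  have hρ₁ : ρ' / ρ ≤ 1 := (div_le_one hρ).2 hρ'
  have hC : 0 ≤ S + (ρ' / ρ) ^ 2 + Real.exp (-L * (σ - σ')) :=
    add_nonneg (add_nonneg hS₀ (sq_nonneg _)) (Real.exp_pos _).le
  refine hamNorm_le_mul_of_hamTerm_le <| hamTerm_le hC fun l α j hj => ?_
  rw [hR, hQ]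
  split_ifs with hkept
  · simp only [sub_self, norm_zero, zero_mul]
    exact mul_nonneg hC (mul_nonneg (norm_nonneg _) (hamWeight_nonneg hm.pos hρ.le j l α))
  rw [sub_zero, hamWeight_sub_eq hm.pos hρ.ne', mul_left_comm]
  refine mul_le_mul_of_nonneg_right (mul_pow_mul_exp_le_add (hmμ₀ _) (hmμ₁ _) (by positivity)
    hρ₁ (sub_nonneg.2 hσ') (Nat.cast_nonneg _) hS₀ ?_)
    (mul_nonneg (norm_nonneg _) (hamWeight_nonneg hm.pos hρ.le j l α))
  rw [not_and_or, not_and_or, not_le, not_le] at hkept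
  refine hkept.imp_left fun hA => le_csSup ⟨1, ?_⟩ ⟨_, ?_, rfl⟩
  · rintro _ ⟨A, -, rfl⟩
    exact hmμ₁ A
  · show _ ∉ 𝔸
    rwa [← under_eq_erase hj]

theorem truncation_estimate
    (κ M : ℝ) (hκ : 0 < κ) (hM : 1 ≤ M) (m : ℕ → ℝ) (hm : IsMassSeq κ M m)
    (β μ ρ σ ρ' σ' L : ℝ)
    (hβ : β ∈ Set.Ioo (0 : ℝ) 1) (hμ0 : 0 < μ) (hμβ : μ < β)
    (hρ : 0 < ρ) (hσ : 0 < σ) (hρ'0 : 0 < ρ') (hρ' : ρ' ≤ ρ)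
    (hσ'0 : 0 < σ') (hσ' : σ' ≤ σ) (hL : 1 ≤ L)
    (𝔸 : Set (Finset ℕ))
    (P : FormalHam) (hP : hamNorm m β ρ σ P ≠ ⊤)
    (Q R : FormalHam)
    (hQ : ∀ l α, Q l α =
      if under (hSupp l α) ∈ 𝔸 ∧ ((l1 l : ℕ) : ℝ) ≤ L ∧ a1 α ≤ 1 then P l α else 0)
    (hR : ∀ l α, R l α = P l α - Q l α) :
    hamNorm m (β - μ) ρ' σ' R ≤
      ENNReal.ofReal
        (sSup ((fun A : Finset ℕ => mProd m A ^ μ) '' {A | A ∉ 𝔸}) +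
          (ρ' / ρ) ^ 2 + Real.exp (-L * (σ - σ'))) *
        hamNorm m β ρ σ P :=
  truncation_estimate_general κ M m hm β μ ρ σ ρ' σ' L hμ0 hρ'0 hρ' hσ' 𝔸 P Q R hQ hR
end
end

section
/- Let ξ ∈ ℓ∞(ℕ,ℝ), γ > 0, and let Q be a formal Hamiltonian with ‖Q‖_{β,ρ,σ} < ∞ whose coefficients vanish unless |α|₁ ≤ 1, and such that |Σ_j l_j ξ_j| ≥ γ for every l ≠ 0 for which some coefficient Q^{[l]}_α is nonzero. Let N be the formal Hamiltonian of ξ·J, i.e. N^{[0]}_{𝟙_j} = m_j ξ_j for each j and all other coefficients zero, and let ⟨Q⟩ be the formal Hamiltonian with ⟨Q⟩^{[0]}_α = Q^{[0]}_α and ⟨Q⟩^{[l]}_α = 0 for l ≠ 0. Define G by G^{[l]}_α = −i (Σ_j l_j ξ_j)^{−1} Q^{[l]}_α for l ≠ 0 and G^{[l]}_α = 0 for l = 0. Then the Poisson bracket {N,G} is well defined (each coefficient given by an absolutely summable family), the cohomological equation {N,G} + Q = ⟨Q⟩ holds coefficientwise, and ‖G‖_{β,ρ,σ} ≤ γ^{−1}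 ‖Q‖_{β,ρ,σ}. -/
/-!
Common setting: mass sequences, formal Hamiltonians `h = (h^{[l]}_α)` indexed by
finitely supported `l : ℕ → ℤ`, `α : ℕ → ℕ`, the weighted norms `‖·‖_{β,ρ,σ}`, and
the (formal) Poisson bracket relative to the symplectic form `Σ_q m_q dJ_q ∧ dφ_q`.
-/

open scoped ENNReal NNReal BigOperators Classical

noncomputable section

/-- The formal Hamiltonian of `N = ξ·J` (mass scalar product): `N^{[0]}_{𝟙_j} = m_j ξ_j`
and all other coefficients vanish. -/
def linearHam (m ξ : ℕ → ℝ) : FormalHam := fun l α =>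
  if l = 0 then
    ∑ j ∈ α.support, (if α = Finsupp.single j 1 then ((m j : ℂ) * (ξ j : ℂ)) else 0)
  else 0

/-- The angular average `⟨Q⟩`: keep only the coefficients with `l = 0`. -/
def avgHam (Q : FormalHam) : FormalHam := fun l α => if l = 0 then Q l α else 0

/-- The solution `G` of the cohomological equation:
`G^{[l]}_α = −i (Σ_j l_j ξ_j)^{-1} Q^{[l]}_α` for `l ≠ 0`, and `G^{[0]}_α = 0`. -/
def cohomSol (ξ : ℕ → ℝ) (Q : FormalHam) : FormalHam := fun l α =>
  if l = 0 then 0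
  else (-Complex.I) * (((∑ j ∈ l.support, (l j : ℝ) * ξ j : ℝ) : ℂ))⁻¹ * Q l α

/-!
Since `N = ξ·J` depends only on the actions, bracketing with `N` acts diagonally on Fourier
modes: `{N,G}^{[l]}_α = -i (l·ξ) G^{[l]}_α`, the only contributing terms being
`(q, l', α') = (q, 0, 𝟙_q)` with `q ∈ supp l`. Dividing by the nonresonant small divisor
`l·ξ` solves the equation mode by mode and multiplies each coefficient by at most `γ⁻¹`,
which the weighted norm sees termwise.
-/

section Bracket

variable {m : ℕ → ℝ} (ξ : ℕ → ℝ)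

lemma linearHam_zero_single (j : ℕ) :
    linearHam m ξ 0 (Finsupp.single j 1) = (m j : ℂ) * (ξ j : ℂ) := by
  simp [linearHam]

lemma linearHam_eq_zero {l : ℕ →₀ ℤ} {α : ℕ →₀ ℕ}
    (h : ¬(l = 0 ∧ ∃ j, α = Finsupp.single j 1)) : linearHam m ξ l α = 0 := by
  by_cases hl : l = 0
  · exact (if_pos hl).trans (Finset.sum_eq_zero fun j _ => if_neg fun hα => h ⟨hl, j, hα⟩)
  · exact if_neg hl

lemma bracketTerm_linearHam (G : FormalHam) (l : ℕ →₀ ℤ) (α : ℕ →₀ ℕ)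
    {q : ℕ} (hq : m q ≠ 0) (l' : ℕ →₀ ℤ) (α' : ℕ →₀ ℕ) :
    bracketTerm m (linearHam m ξ) G l α (q, l', α') =
      if l' = 0 ∧ α' = Finsupp.single q 1 then -((l q : ℂ) * (ξ q : ℂ)) * G l α else 0 := by
  split_ifs with h
  · obtain ⟨rfl, rfl⟩ := h
    have hle : Finsupp.single q 1 ≤ α + Finsupp.single q 1 := le_add_self
    simp only [bracketTerm, if_pos hle, add_tsub_cancel_right, linearHam_zero_single, sub_zero,
      Finsupp.coe_zero, Pi.zero_apply, Int.cast_zero, zero_mul, zero_sub,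
      Finsupp.single_eq_same, Nat.cast_one, one_mul]
    have hq' : (m q : ℂ) ≠ 0 := Complex.ofReal_ne_zero.2 hq
    field_simp
  · by_cases hj : l' = 0 ∧ ∃ j, α' = Finsupp.single j 1
    · obtain ⟨rfl, j, rfl⟩ := hj
      have hjq : j ≠ q := fun hjq => h ⟨rfl, hjq ▸ rfl⟩
      simp [bracketTerm, hjq]
    · simp [bracketTerm, linearHam_eq_zero ξ hj]

lemma hasSum_bracketTerm_linearHam (hm : ∀ q, m q ≠ 0) (G : FormalHam)
    (l : ℕ →₀ ℤ) (α : ℕ →₀ ℕ) :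
    HasSum (bracketTerm m (linearHam m ξ) G l α)
      (-((∑ j ∈ l.support, (l j : ℝ) * ξ j : ℝ) : ℂ) * G l α) := by
  set g : ℕ → ℕ × (ℕ →₀ ℤ) × (ℕ →₀ ℕ) := fun q => (q, 0, Finsupp.single q 1)
  have hg : g.Injective := fun a b h => (Prod.ext_iff.1 h).1
  have hrange : ∀ x ∉ Set.range g, bracketTerm m (linearHam m ξ) G l α x = 0 := by
    rintro ⟨q, l', α'⟩ hx
    rw [bracketTerm_linearHam ξ G l α (hm q), if_neg]
    rintro ⟨rfl, rfl⟩
    exact hx ⟨q, rfl⟩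
  refine (hg.hasSum_iff hrange).1 ?_
  have hcomp : bracketTerm m (linearHam m ξ) G l α ∘ g =
      fun q => -((l q : ℂ) * (ξ q : ℂ)) * G l α := by
    funext q
    simp [g, bracketTerm_linearHam ξ G l α (hm q)]
  have hval : -((∑ j ∈ l.support, (l j : ℝ) * ξ j : ℝ) : ℂ) * G l α =
      ∑ q ∈ l.support, -((l q : ℂ) * (ξ q : ℂ)) * G l α := by
    push_cast
    rw [← Finset.sum_neg_distrib, Finset.sum_mul]
  rw [hcomp, hval]
  exact hasSum_sum_of_ne_finset_zero fun q hq => by simp [Finsupp.notMem_support_iff.1 hq]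

lemma bracket_linearHam (hm : ∀ q, m q ≠ 0) (G : FormalHam) (l : ℕ →₀ ℤ) (α : ℕ →₀ ℕ) :
    bracket m (linearHam m ξ) G l α =
      -Complex.I * ((∑ j ∈ l.support, (l j : ℝ) * ξ j : ℝ) : ℂ) * G l α := by
  rw [bracket, (hasSum_bracketTerm_linearHam ξ hm G l α).tsum_eq]
  ring

lemma bracket_linearHam_cohomSol_add_self (hm : ∀ q, m q ≠ 0) (Q : FormalHam)
    (l : ℕ →₀ ℤ) (α : ℕ →₀ ℕ)
    (hres : l ≠ 0 → Q l α ≠ 0 → (∑ j ∈ l.support, (l j : ℝ) * ξ j) ≠ 0) :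
    bracket m (linearHam m ξ) (cohomSol ξ Q) l α + Q l α = avgHam Q l α := by
  by_cases hl : l = 0
  · simp [bracket_linearHam ξ hm, cohomSol, avgHam, hl]
  by_cases hQ : Q l α = 0
  · simp [bracket_linearHam ξ hm, cohomSol, avgHam, hl, hQ]
  have hS : ((∑ j ∈ l.support, (l j : ℝ) * ξ j : ℝ) : ℂ) ≠ 0 :=
    Complex.ofReal_ne_zero.2 (hres hl hQ)
  simp only [bracket_linearHam ξ hm, cohomSol, avgHam, if_neg hl]
  field_simp
  rw [Complex.I_sq]
  ring

end Bracket

lemma norm_cohomSol_le {ξ : ℕ → ℝ} {γ : ℝ} (hγ : 0 < γ) {Q : FormalHam}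
    {l : ℕ →₀ ℤ} {α : ℕ →₀ ℕ}
    (hres : l ≠ 0 → Q l α ≠ 0 → γ ≤ |∑ j ∈ l.support, (l j : ℝ) * ξ j|) :
    ‖cohomSol ξ Q l α‖ ≤ γ⁻¹ * ‖Q l α‖ := by
  by_cases hl : l = 0
  · simp only [cohomSol, if_pos hl, norm_zero]
    positivity
  by_cases hQ : Q l α = 0
  · simp [cohomSol, hQ]
  rw [cohomSol, if_neg hl, norm_mul, norm_mul, norm_neg, Complex.norm_I, one_mul, norm_inv,
    Complex.norm_real, Real.norm_eq_abs]
  gcongr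
  exact hres hl hQ

lemma hamTerm_le_of_norm_le {m : ℕ → ℝ} {β ρ σ c : ℝ} (hc : 0 ≤ c) {g h : FormalHam}
    (hgh : ∀ l α, ‖g l α‖ ≤ c * ‖h l α‖) (j : ℕ) (p : (ℕ →₀ ℤ) × (ℕ →₀ ℕ)) :
    hamTerm m β ρ σ g j p ≤ ENNReal.ofReal c * hamTerm m β ρ σ h j p := by
  unfold hamTerm
  split_ifs
  · rw [← ENNReal.ofReal_mul hc, ENNReal.ofReal_le_ofReal_iff']
    -- the weight `w` may be negative (rpow and powers of `ρ`); then the left side is `ofReal` of `≤ 0`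
    set w := mProd m ((hSupp p.1 p.2).erase j) ^ (-β) * ρ ^ a1 p.2 * Real.exp (σ * l1 p.1)
    have hg := hgh p.1 p.2
    have hg0 := norm_nonneg (g p.1 p.2)
    rcases le_total 0 w with hw | hw
    · left
      calc _ = w * ‖g p.1 p.2‖ := by ring
        _ ≤ w * (c * ‖h p.1 p.2‖) := by gcongr
        _ = _ := by ring
    · right
      calc _ = w * ‖g p.1 p.2‖ := by ring
        _ ≤ 0 := mul_nonpos_of_nonpos_of_nonneg hw hg0
  · simp

lemma hamNorm_le_of_norm_le {m : ℕ → ℝ} {β ρ σ c : ℝ} (hc : 0 ≤ c) {g h : FormalHam}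
    (hgh : ∀ l α, ‖g l α‖ ≤ c * ‖h l α‖) :
    hamNorm m β ρ σ g ≤ ENNReal.ofReal c * hamNorm m β ρ σ h := by
  rw [hamNorm, hamNorm, ENNReal.mul_iSup]
  refine iSup_mono fun j => ?_
  rw [mul_left_comm, ← ENNReal.tsum_mul_left (a := ENNReal.ofReal c)]
  exact mul_le_mul_right (ENNReal.tsum_le_tsum (hamTerm_le_of_norm_le hc hgh j)) _

theorem cohomological_equation_general
    (κ M : ℝ) (m : ℕ → ℝ) (hm : IsMassSeq κ M m)
    (β ρ σ : ℝ)
    (ξ : ℕ → ℝ) (γ : ℝ) (hγ : 0 < γ)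
    (Q : FormalHam)
    (hdioph : ∀ l : ℕ →₀ ℤ, l ≠ 0 → (∃ α, Q l α ≠ 0) →
      γ ≤ |∑ j ∈ l.support, (l j : ℝ) * ξ j|) :
    (∀ l α, Summable (bracketTerm m (linearHam m ξ) (cohomSol ξ Q) l α)) ∧
    (∀ l α, bracket m (linearHam m ξ) (cohomSol ξ Q) l α + Q l α = avgHam Q l α) ∧
    hamNorm m β ρ σ (cohomSol ξ Q) ≤ ENNReal.ofReal γ⁻¹ * hamNorm m β ρ σ Q := by
  have hm0 : ∀ q, m q ≠ 0 := fun q => (hm.pos q).ne'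
  refine ⟨fun l α => (hasSum_bracketTerm_linearHam ξ hm0 _ l α).summable,
    fun l α => bracket_linearHam_cohomSol_add_self ξ hm0 Q l α fun hl hQ => ?_,
    hamNorm_le_of_norm_le (inv_nonneg.2 hγ.le) fun l α =>
      norm_cohomSol_le hγ fun hl hQ => hdioph l hl ⟨α, hQ⟩⟩
  exact abs_pos.1 (hγ.trans_le (hdioph l hl ⟨α, hQ⟩))

theorem cohomological_equation
    (κ M : ℝ) (hκ : 0 < κ) (hM : 1 ≤ M) (m : ℕ → ℝ) (hm : IsMassSeq κ M m)
    (β ρ σ : ℝ) (hβ : β ∈ Set.Ioo (0 : ℝ) 1) (hρ : 0 < ρ) (hσ : 0 < σ)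
    (ξ : ℕ → ℝ) (γ : ℝ) (hγ : 0 < γ)
    (Q : FormalHam) (hQfin : hamNorm m β ρ σ Q ≠ ⊤)
    (hQaff : ∀ l α, 2 ≤ a1 α → Q l α = 0)
    (hdioph : ∀ l : ℕ →₀ ℤ, l ≠ 0 → (∃ α, Q l α ≠ 0) →
      γ ≤ |∑ j ∈ l.support, (l j : ℝ) * ξ j|) :
    (∀ l α, Summable (bracketTerm m (linearHam m ξ) (cohomSol ξ Q) l α)) ∧
    (∀ l α, bracket m (linearHam m ξ) (cohomSol ξ Q) l α + Q l α = avgHam Q l α) ∧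
    hamNorm m β ρ σ (cohomSol ξ Q) ≤ ENNReal.ofReal γ⁻¹ * hamNorm m β ρ σ Q :=
  cohomological_equation_general κ M m hm β ρ σ ξ γ hγ Q hdioph
end
end

section
/- Assume S_β = sup_{q∈ℕ} Σ_{n≥0} (m_{q+n}/m_q)^{1−β} < ∞. There is a constant c > 0, depending only on S_β, with the following property. Let 0 < ρ ≤ ρ*, 0 < σ ≤ σ*, 0 < r < ρ, 0 < s < σ, and let h, g be formal Hamiltonians with ‖h‖_{β,ρ,σ} < ∞ and ‖g‖_{β,ρ*,σ*} < ∞. Then every coefficient of the Poisson bracket {h,g} is given by an absolutely summable family, and ‖{h,g}‖_{β,ρ−r,σ−s} ≤ c · max{ 1/(r(σ*−σ+s)), 1/(s(ρ*−ρ+r)) } · ‖h‖_{β,ρ,σ} · ‖g‖_{β,ρ*,σ*}. -/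
/-!
Common setting: mass sequences, formal Hamiltonians `h = (h^{[l]}_α)` indexed by
finitely supported `l : ℕ → ℤ`, `α : ℕ → ℕ`, the weighted norms `‖·‖_{β,ρ,σ}`, and
the (formal) Poisson bracket relative to the symplectic form `Σ_q m_q dJ_q ∧ dφ_q`.
-/

open scoped ENNReal NNReal BigOperators Classical

noncomputable section

/-!
A term of `{h,g}^{[l]}_α` pairs a monomial `(l', α')` of `h` with a monomial `(l'', α'')` of `g`,
where `(l', α') + (l'', α'') = (l, α + 𝟙_q)`, and it vanishes unless `q` lies in both supports
`A'` and `A''`. Three estimates bound it.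

* Masses: `A ⊆ A' ∪ A''` and `q ∈ A' ∩ A''` give `m_{A'} m_{A''} ≤ m_q m_A`. As `x ↦ x^{-β}`
  decreases, this bounds the weight `m_{A∖j}^{-β} / m_q` (`j = max A`) by
  `m_j · (m_{j'}/m_q)^{1-β}/m_{j'} · (m_{j''}/m_j)^{1-β}/m_{j''} · m_{A'∖j'}^{-β} m_{A''∖j''}^{-β}`
  where `j' = max A' ≥ q` and `j'' = max A'' ≥ j`, or the same with the two factors exchanged.
* Cauchy estimates: the derivative factors `l'_q α''_q` and `α'_q l''_q` are paid by the loss of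
  analyticity, through `n e^{-t n} ≤ 1/t` and `n ρ'^{n-1} / T^n ≤ 1/(T - ρ')`.
* Summation: over `q` the Cauchy factors cost `1/s`, `1/(ρ* - ρ + r)`, `1/r`, `1/(σ* - σ + s)`;
  over the monomials of top index `k ≥ q`, the factor `(m_k/m_q)^{1-β}` against the block bound
  `m_k ‖·‖` of the norm costs `S_β`, once for `h` and once for `g`.

Two terms and two orderings of the top indices give the constant `4 S_β²`; the same bound on the
weighted sum over `(q, l', α')` gives absolute summability.
-/

namespace BracketEstimate

open Finset

abbrev MonoIdx := (ℕ →₀ ℤ) × (ℕ →₀ ℕ)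

def topIdx (p : MonoIdx) : ℕ := (hSupp p.1 p.2).sup id

lemma max_eq_sup_id {A : Finset ℕ} (hA : A.Nonempty) : A.max = ↑(A.sup id) := by
  rw [Finset.max_eq_sup_coe]
  exact (Finset.coe_sup_of_nonempty hA id).symm

lemma sup_id_eq_of_max_eq {A : Finset ℕ} {j : ℕ} (h : A.max = j) : A.sup id = j := by
  have hA : A.Nonempty := by
    by_contra hA
    rw [Finset.not_nonempty_iff_eq_empty.1 hA, Finset.max_empty] at h
    exact WithBot.bot_ne_coe h
  exact WithBot.coe_injective ((max_eq_sup_id hA).symm.trans h)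

lemma sup_id_mem {A : Finset ℕ} (hA : A.Nonempty) : A.sup id ∈ A := by
  obtain ⟨i, hi, he⟩ := A.exists_mem_eq_sup hA id
  exact he ▸ hi

lemma mem_hSupp {l : ℕ →₀ ℤ} {α : ℕ →₀ ℕ} {q : ℕ} :
    q ∈ hSupp l α ↔ l q ≠ 0 ∨ α q ≠ 0 := by
  simp [hSupp]

lemma hSupp_subset_union {l l' l'' : ℕ →₀ ℤ} {α α' α'' : ℕ →₀ ℕ} {q : ℕ}
    (hl : l = l' + l'') (hα : α + Finsupp.single q 1 = α' + α'') :
    hSupp l α ⊆ hSupp l' α' ∪ hSupp l'' α'' := by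
  intro i hi
  have hαi := DFunLike.congr_fun hα i
  simp only [Finsupp.coe_add, Pi.add_apply] at hαi
  simp only [mem_union, mem_hSupp, hl, Finsupp.coe_add, Pi.add_apply] at hi ⊢
  omega

section Mass

variable {m : ℕ → ℝ}

lemma mProd_mul_mProd_le (hm0 : ∀ i, 0 ≤ m i) (hm1 : ∀ i, m i ≤ 1) {A A' A'' : Finset ℕ}
    {q : ℕ} (hA : A ⊆ A' ∪ A'') (hq : q ∈ A' ∩ A'') :
    mProd m A' * mProd m A'' ≤ m q * mProd m A := by
  have hinter : mProd m (A' ∩ A'') ≤ m q := by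
    simpa [mProd] using prod_le_prod_of_subset_of_le_one (singleton_subset_iff.2 hq)
      (fun i _ => hm0 i) (fun i _ _ => hm1 i)
  have hunion : mProd m (A' ∪ A'') ≤ mProd m A :=
    prod_le_prod_of_subset_of_le_one hA (fun i _ => hm0 i) (fun i _ _ => hm1 i)
  rw [mProd, mProd, ← prod_union_inter, mul_comm]
  exact mul_le_mul hinter hunion (prod_nonneg fun i _ => hm0 i) (hm0 q)

lemma mProd_insert_le (hm0 : ∀ i, 0 ≤ m i) (hm1 : ∀ i, m i ≤ 1) (hanti : Antitone m)
    (q : ℕ) (A : Finset ℕ) :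
    mProd m (insert q A) ≤ m (A.sup id) * mProd m (A.erase (A.sup id)) := by
  rcases A.eq_empty_or_nonempty with rfl | hA
  · simpa [mProd] using hanti (Nat.zero_le q)
  · rw [mProd, mProd, mul_prod_erase A m (sup_id_mem hA)]
    exact prod_le_prod_of_subset_of_le_one (subset_insert q A) (fun i _ => hm0 i)
      (fun i _ _ => hm1 i)

end Mass

/-- The right-hand side is `c⁻¹ * (a * b * e' * e'' / (c * d)) ^ (-β)`. -/
lemma rpow_neg_mul_inv_le {β a b c d e' e'' u : ℝ} (hβ : 0 ≤ β) (ha : 0 < a) (hb : 0 < b)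
    (hc : 0 < c) (hd : 0 < d) (he' : 0 < e') (he'' : 0 < e'')
    (h : a * e' * (b * e'') ≤ c * (d * u)) :
    u ^ (-β) * c⁻¹ ≤
      d * ((a / c) ^ (1 - β) / a) * ((b / d) ^ (1 - β) / b) * (e' ^ (-β) * e'' ^ (-β)) := by
  have hsplit : ∀ z : ℝ, 0 < z → z ^ (1 - β) = z * z ^ (-β) := fun z hz => by
    rw [sub_eq_add_neg, Real.rpow_add hz, Real.rpow_one]
  have hrhs : d * ((a / c) ^ (1 - β) / a) * ((b / d) ^ (1 - β) / b) * (e' ^ (-β) * e'' ^ (-β))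
      = c⁻¹ * (a / c * (b / d) * e' * e'') ^ (-β) := by
    rw [hsplit _ (by positivity), hsplit _ (by positivity), Real.mul_rpow (by positivity) he''.le,
      Real.mul_rpow (by positivity) he'.le, Real.mul_rpow (by positivity) (by positivity)]
    field_simp
  rw [hrhs, mul_comm]
  refine mul_le_mul_of_nonneg_left (Real.rpow_le_rpow_of_nonpos (by positivity) ?_
    (neg_nonpos.2 hβ)) (by positivity)
  calc a / c * (b / d) * e' * e'' = a * e' * (b * e'') / (c * d) := by field_simp
    _ ≤ u := by rw [div_le_iff₀ (by positivity)]; linarith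

section Weights

variable {m : ℕ → ℝ} {β : ℝ}

def transferWeight (m : ℕ → ℝ) (β : ℝ) (a b : ℕ) : ℝ≥0∞ :=
  if a ≤ b then ENNReal.ofReal ((m b / m a) ^ (1 - β) / m b) else 0

/-- For a monomial of `{h,g}` with top index `j` whose factors have top indices `j'` and `j''`,
one of the two summands applies since `j ≤ max j' j''`. -/
def pairWeight (m : ℕ → ℝ) (β : ℝ) (q j j' j'' : ℕ) : ℝ≥0∞ :=
  transferWeight m β q j' * transferWeight m β j j'' +
    transferWeight m β q j'' * transferWeight m β j j'

def massWeight (m : ℕ → ℝ) (β : ℝ) (A : Finset ℕ) : ℝ := mProd m (A.erase (A.sup id)) ^ (-β)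

lemma massWeight_nonneg (hm0 : ∀ i, 0 ≤ m i) (A : Finset ℕ) : 0 ≤ massWeight m β A :=
  Real.rpow_nonneg (prod_nonneg fun i _ => hm0 i) _

lemma ofReal_rpow_neg_mul_inv_le (hpos : ∀ i, 0 < m i) (hβ : 0 ≤ β) {q j j' j'' : ℕ}
    (hq : q ≤ j') (hj : j ≤ j'') {e e' e'' : ℝ} (he' : 0 < e') (he'' : 0 < e'')
    (hmass : m j' * e' * (m j'' * e'') ≤ m q * (m j * e)) :
    ENNReal.ofReal (e ^ (-β) * (m q)⁻¹) ≤ ENNReal.ofReal (m j) *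
      (transferWeight m β q j' * transferWeight m β j j'') *
        ENNReal.ofReal (e' ^ (-β)) * ENNReal.ofReal (e'' ^ (-β)) := by
  have hreal := rpow_neg_mul_inv_le hβ (hpos j') (hpos j'') (hpos q) (hpos j) he' he'' hmass
  have hw : ∀ a b, 0 ≤ (m b / m a) ^ (1 - β) / m b := fun a b =>
    div_nonneg (Real.rpow_nonneg (div_nonneg (hpos b).le (hpos a).le) _) (hpos b).le
  have hE' := Real.rpow_nonneg he'.le (-β)
  refine (ENNReal.ofReal_le_ofReal hreal).trans_eq ?_
  rw [transferWeight, transferWeight, if_pos hq, if_pos hj,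
    ENNReal.ofReal_mul (mul_nonneg (mul_nonneg (hpos j).le (hw _ _)) (hw _ _)),
    ENNReal.ofReal_mul (mul_nonneg (hpos j).le (hw _ _)), ENNReal.ofReal_mul (hpos j).le,
    ENNReal.ofReal_mul hE']
  ring

lemma ofReal_massWeight_mul_inv_le (hpos : ∀ i, 0 < m i) (hm1 : ∀ i, m i ≤ 1)
    (hanti : Antitone m) (hβ : 0 ≤ β) {A A' A'' : Finset ℕ} {q : ℕ} (hA : A ⊆ A' ∪ A'')
    (hq' : q ∈ A') (hq'' : q ∈ A'') :
    ENNReal.ofReal (massWeight m β A * (m q)⁻¹) ≤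
      ENNReal.ofReal (m (A.sup id)) * pairWeight m β q (A.sup id) (A'.sup id) (A''.sup id) *
        ENNReal.ofReal (massWeight m β A') * ENNReal.ofReal (massWeight m β A'') := by
  have hm0 : ∀ i, 0 ≤ m i := fun i => (hpos i).le
  have hprod : ∀ B : Finset ℕ, 0 < mProd m B := fun B => prod_pos fun i _ => hpos i
  have hmass : m (A'.sup id) * mProd m (A'.erase (A'.sup id)) *
      (m (A''.sup id) * mProd m (A''.erase (A''.sup id))) ≤
      m q * (m (A.sup id) * mProd m (A.erase (A.sup id))) := by
    rw [mProd, mProd, mul_prod_erase _ _ (sup_id_mem ⟨q, hq'⟩),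
      mul_prod_erase _ _ (sup_id_mem ⟨q, hq''⟩)]
    exact (mProd_mul_mProd_le hm0 hm1 (insert_subset (mem_union_left _ hq') hA)
      (mem_inter.2 ⟨hq', hq''⟩)).trans
      (mul_le_mul_of_nonneg_left (mProd_insert_le hm0 hm1 hanti q A) (hm0 q))
  have htop : A.sup id ≤ A'.sup id ⊔ A''.sup id := by
    rw [← Finset.sup_union]
    exact Finset.sup_mono hA
  set j := A.sup id
  set j' := A'.sup id
  set j'' := A''.sup id
  rcases le_max_iff.1 htop with hj | hj
  · calc ENNReal.ofReal (massWeight m β A * (m q)⁻¹)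
        ≤ ENNReal.ofReal (m j) * (transferWeight m β q j'' * transferWeight m β j j') *
            ENNReal.ofReal (massWeight m β A'') * ENNReal.ofReal (massWeight m β A') :=
          ofReal_rpow_neg_mul_inv_le hpos hβ (Finset.le_sup (f := id) hq'') hj (hprod _)
            (hprod _) ((mul_comm _ _).trans_le hmass)
      _ ≤ ENNReal.ofReal (m j) * pairWeight m β q j j' j'' *
            ENNReal.ofReal (massWeight m β A'') * ENNReal.ofReal (massWeight m β A') := by
          gcongr
          exact le_add_self
      _ = _ := by ring
  · calc ENNReal.ofReal (massWeight m β A * (m q)⁻¹)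
        ≤ ENNReal.ofReal (m j) * (transferWeight m β q j' * transferWeight m β j j'') *
            ENNReal.ofReal (massWeight m β A') * ENNReal.ofReal (massWeight m β A'') :=
          ofReal_rpow_neg_mul_inv_le hpos hβ (Finset.le_sup (f := id) hq') hj (hprod _)
            (hprod _) hmass
      _ ≤ _ := by
          gcongr
          exact le_self_add

end Weights

section Norm

variable {m : ℕ → ℝ} {β ρ σ : ℝ}

def monoWeight (m : ℕ → ℝ) (β ρ σ : ℝ) (p : MonoIdx) : ℝ :=
  massWeight m β (hSupp p.1 p.2) * (ρ ^ a1 p.2 * Real.exp (σ * l1 p.1))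

def hamDensity (m : ℕ → ℝ) (β ρ σ : ℝ) (h : FormalHam) (p : MonoIdx) : ℝ≥0∞ :=
  hamTerm m β ρ σ h (topIdx p) p

lemma hamTerm_eq (h : FormalHam) (j : ℕ) (p : MonoIdx) :
    hamTerm m β ρ σ h j p = if (hSupp p.1 p.2).max = j then
      ENNReal.ofReal (monoWeight m β ρ σ p) * ‖h p.1 p.2‖ₑ else 0 := by
  unfold hamTerm
  split_ifs with hmax
  · rw [monoWeight, massWeight, ← sup_id_eq_of_max_eq hmax, ← ofReal_norm,
      ← ENNReal.ofReal_mul' (norm_nonneg _)]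
    ring_nf
  · rfl

lemma hamDensity_eq {h : FormalHam} {p : MonoIdx} (hp : (hSupp p.1 p.2).Nonempty) :
    hamDensity m β ρ σ h p = ENNReal.ofReal (monoWeight m β ρ σ p) * ‖h p.1 p.2‖ₑ := by
  rw [hamDensity, hamTerm_eq]
  exact if_pos (max_eq_sup_id hp)

lemma hamNorm_le_iff (hpos : ∀ i, 0 < m i) {h : FormalHam} {C : ℝ≥0∞} :
    hamNorm m β ρ σ h ≤ C ↔ ∀ j, ∑' p, hamTerm m β ρ σ h j p ≤ ENNReal.ofReal (m j) * C := by
  simp only [hamNorm, iSup_le_iff]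
  refine forall_congr' fun j => ENNReal.inv_mul_le_iff ?_ ENNReal.ofReal_ne_top
  exact (ENNReal.ofReal_pos.2 (hpos j)).ne'

end Norm

lemma a1_add (α α' : ℕ →₀ ℕ) : a1 (α + α') = a1 α + a1 α' :=
  map_add Finsupp.degree α α'

lemma le_a1 (α : ℕ →₀ ℕ) (q : ℕ) : α q ≤ a1 α :=
  Finsupp.le_degree q α

lemma l1_add_le (l l' : ℕ →₀ ℤ) : l1 (l + l') ≤ l1 l + l1 l' := by
  unfold l1
  rw [Finsupp.sum_of_support_subset _ Finsupp.support_add _ (by simp),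
    Finsupp.sum_of_support_subset l subset_union_left _ (by simp),
    Finsupp.sum_of_support_subset l' subset_union_right _ (by simp), ← sum_add_distrib]
  exact sum_le_sum fun i _ => Int.natAbs_add_le _ _

lemma natCast_mul_exp_neg_le {t : ℝ} (ht : 0 < t) (n : ℕ) : n * Real.exp (-(t * n)) ≤ t⁻¹ := by
  have hexp : t * n ≤ Real.exp (t * n) := by linarith [Real.add_one_le_exp (t * n)]
  calc n * Real.exp (-(t * n)) = t * n / Real.exp (t * n) / t := by
        rw [Real.exp_neg]; field_simp
    _ ≤ 1 / t := by gcongr; exact div_le_one_of_le₀ hexp (Real.exp_pos _).le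
    _ = t⁻¹ := one_div t

lemma natCast_mul_pow_pred_div_le {x y : ℝ} (hy : 0 ≤ y) (hyx : y < x) (n : ℕ) :
    n * y ^ (n - 1) / x ^ n ≤ (x - y)⁻¹ := by
  have hgeom : (n : ℝ) * y ^ (n - 1) ≤ ∑ i ∈ range n, x ^ i * y ^ (n - 1 - i) :=
    calc (n : ℝ) * y ^ (n - 1) = ∑ i ∈ range n, y ^ (n - 1) := by simp
      _ = ∑ i ∈ range n, y ^ i * y ^ (n - 1 - i) := Finset.sum_congr rfl fun i hi => by
          rw [← pow_add]
          have := mem_range.1 hi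
          congr 1
          omega
      _ ≤ ∑ i ∈ range n, x ^ i * y ^ (n - 1 - i) := Finset.sum_le_sum fun i _ => by gcongr
  have hx : 0 < x := hy.trans_lt hyx
  rw [div_le_iff₀ (by positivity), inv_mul_eq_div, le_div_iff₀ (by linarith)]
  nlinarith [geom_sum₂_mul x y n, pow_nonneg hy n]

/-- The price of `∂_{φ_q}` on `e^{i l·φ}` when the angular strip shrinks by `t`. -/
def angleFactor (t : ℝ) (q : ℕ) (l : ℕ →₀ ℤ) : ℝ :=
  (l q).natAbs * Real.exp (-(t * l1 l))

/-- The price of `∂_{J_q}` on `J^α` when the action radius shrinks from `T` to `ρ'`. -/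
def actionFactor (ρ' T : ℝ) (q : ℕ) (α : ℕ →₀ ℕ) : ℝ :=
  α q * ρ' ^ (a1 α - 1) / T ^ a1 α

lemma tsum_ofReal_natCast_mul {s : Finset ℕ} {f : ℕ → ℕ} (hf : ∀ q ∉ s, f q = 0) {C : ℝ}
    (hC : 0 ≤ C) :
    ∑' q, ENNReal.ofReal (f q * C) = ENNReal.ofReal ((∑ q ∈ s, f q : ℕ) * C) := by
  rw [tsum_eq_sum (s := s) fun q hq => by simp [hf q hq],
    ← ENNReal.ofReal_sum_of_nonneg fun q _ => by positivity, Nat.cast_sum, sum_mul]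

lemma tsum_ofReal_angleFactor_le {t : ℝ} (ht : 0 < t) (l : ℕ →₀ ℤ) :
    ∑' q, ENNReal.ofReal (angleFactor t q l) ≤ ENNReal.ofReal t⁻¹ := by
  simp only [angleFactor]
  rw [tsum_ofReal_natCast_mul (f := fun q => (l q).natAbs) (s := l.support) (by simp)
    (Real.exp_nonneg _)]
  exact ENNReal.ofReal_le_ofReal (natCast_mul_exp_neg_le ht (l1 l))

lemma tsum_ofReal_actionFactor_le {ρ' T : ℝ} (hρ' : 0 ≤ ρ') (hT : ρ' < T) (α : ℕ →₀ ℕ) :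
    ∑' q, ENNReal.ofReal (actionFactor ρ' T q α) ≤ ENNReal.ofReal (T - ρ')⁻¹ := by
  have hT0 : 0 < T := hρ'.trans_lt hT
  simp_rw [actionFactor, mul_div_assoc]
  rw [tsum_ofReal_natCast_mul (f := α) (s := α.support) (by simp) (by positivity),
    ← mul_div_assoc]
  exact ENNReal.ofReal_le_ofReal (natCast_mul_pow_pred_div_le hρ' hT (a1 α))

lemma angleFactor_nonneg (t : ℝ) (q : ℕ) (l : ℕ →₀ ℤ) : 0 ≤ angleFactor t q l := by
  unfold angleFactor; positivity

lemma actionFactor_nonneg {ρ' T : ℝ} (hρ' : 0 ≤ ρ') (hT : 0 ≤ T) (q : ℕ) (α : ℕ →₀ ℕ) :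
    0 ≤ actionFactor ρ' T q α := by
  unfold actionFactor; positivity

/-- An angle derivative on the first factor and an action derivative on the second; both terms
of the bracket are of this form, with the factors exchanged in the second. -/
lemma pow_mul_exp_mul_le {l l₁ l₂ : ℕ →₀ ℤ} {α α₁ α₂ : ℕ →₀ ℕ} {q : ℕ}
    {ρ' R₁ R₂ τ t σ₁ σ₂ : ℝ} (hl : l1 l ≤ l1 l₁ + l1 l₂) (hα : a1 α + 1 = a1 α₁ + a1 α₂)
    (hρ' : 0 ≤ ρ') (hR₁ : ρ' ≤ R₁) (hR₂ : 0 < R₂) (hτ : 0 ≤ τ) (hτ₁ : τ ≤ σ₁ - t)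
    (hτ₂ : τ ≤ σ₂) :
    ρ' ^ a1 α * Real.exp (τ * l1 l) * ((l₁ q).natAbs * α₂ q) ≤
      angleFactor t q l₁ * actionFactor ρ' R₂ q α₂ * (R₁ ^ a1 α₁ * Real.exp (σ₁ * l1 l₁)) *
        (R₂ ^ a1 α₂ * Real.exp (σ₂ * l1 l₂)) := by
  have hR₁0 : 0 ≤ R₁ := hρ'.trans hR₁
  unfold angleFactor actionFactor
  rcases Nat.eq_zero_or_pos (α₂ q) with hq | hq
  · simp only [hq, CharP.cast_eq_zero, mul_zero, zero_mul]
    positivity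
  have hpow : ρ' ^ a1 α ≤ R₁ ^ a1 α₁ * ρ' ^ (a1 α₂ - 1) := by
    have := hq.trans_le (le_a1 α₂ q)
    rw [show a1 α = a1 α₁ + (a1 α₂ - 1) by omega, pow_add]
    gcongr
  have hexp : Real.exp (τ * l1 l) ≤
      Real.exp (-(t * l1 l₁)) * Real.exp (σ₁ * l1 l₁) * Real.exp (σ₂ * l1 l₂) := by
    rw [← Real.exp_add, ← Real.exp_add, Real.exp_le_exp]
    have hl' : (l1 l : ℝ) ≤ l1 l₁ + l1 l₂ := by exact_mod_cast hl
    nlinarith [mul_le_mul_of_nonneg_left hl' hτ,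
      mul_le_mul_of_nonneg_right hτ₁ (Nat.cast_nonneg (α := ℝ) (l1 l₁)),
      mul_le_mul_of_nonneg_right hτ₂ (Nat.cast_nonneg (α := ℝ) (l1 l₂))]
  calc ρ' ^ a1 α * Real.exp (τ * l1 l) * ((l₁ q).natAbs * α₂ q)
      ≤ R₁ ^ a1 α₁ * ρ' ^ (a1 α₂ - 1) *
          (Real.exp (-(t * l1 l₁)) * Real.exp (σ₁ * l1 l₁) * Real.exp (σ₂ * l1 l₂)) *
          ((l₁ q).natAbs * α₂ q) := by gcongr
    _ = _ := by field_simp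

lemma ofReal_pow_mul_exp_mul_le {ρ ρs σ σs r s : ℝ} (hr : 0 ≤ r) (hrρ : r < ρ)
    (hρρs : ρ ≤ ρs) (hs : 0 ≤ s) (hsσ : s ≤ σ) (hσσs : σ ≤ σs) {l l' l'' : ℕ →₀ ℤ}
    {α α' α'' : ℕ →₀ ℕ} {q : ℕ} (hl : l = l' + l'') (hα : α + Finsupp.single q 1 = α' + α'') :
    ENNReal.ofReal ((ρ - r) ^ a1 α * Real.exp ((σ - s) * l1 l) *
        ((l' q).natAbs * α'' q + α' q * (l'' q).natAbs)) ≤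
      (ENNReal.ofReal (angleFactor s q l') * ENNReal.ofReal (actionFactor (ρ - r) ρs q α'') +
        ENNReal.ofReal (actionFactor (ρ - r) ρ q α') *
          ENNReal.ofReal (angleFactor (σs - σ + s) q l'')) *
        ENNReal.ofReal (ρ ^ a1 α' * Real.exp (σ * l1 l')) *
        ENNReal.ofReal (ρs ^ a1 α'' * Real.exp (σs * l1 l'')) := by
  have hl1 : l1 l ≤ l1 l' + l1 l'' := hl ▸ l1_add_le l' l''
  have ha1 : a1 α + 1 = a1 α' + a1 α'' := by
    rw [← a1_add, ← hα, a1_add]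
    simp [a1]
  have hρ0 : 0 ≤ ρ := by linarith
  have hρs0 : 0 ≤ ρs := by linarith
  have h₁ := pow_mul_exp_mul_le (q := q) (ρ' := ρ - r) (R₁ := ρ) (R₂ := ρs) (τ := σ - s)
    (t := s) (σ₁ := σ) (σ₂ := σs) hl1 ha1 (by linarith) (by linarith) (by linarith)
    (by linarith) le_rfl (by linarith)
  have h₂ := pow_mul_exp_mul_le (q := q) (ρ' := ρ - r) (R₁ := ρs) (R₂ := ρ) (τ := σ - s)
    (t := σs - σ + s) (σ₁ := σs) (σ₂ := σ) (by omega : l1 l ≤ l1 l'' + l1 l')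
    (by omega : a1 α + 1 = a1 α'' + a1 α') (by linarith) (by linarith) (by linarith)
    (by linarith) (by linarith) (by linarith)
  have hA₁ := angleFactor_nonneg s q l'
  have hA₂ := angleFactor_nonneg (σs - σ + s) q l''
  have hB₁ := actionFactor_nonneg (by linarith : 0 ≤ ρ - r) hρs0 q α''
  have hB₂ := actionFactor_nonneg (by linarith : 0 ≤ ρ - r) hρ0 q α'
  rw [mul_add]
  refine (ENNReal.ofReal_add_le).trans ?_
  rw [add_mul, add_mul]
  gcongr ?_ + ?_
  · refine (ENNReal.ofReal_le_ofReal h₁).trans_eq ?_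
    rw [ENNReal.ofReal_mul (by positivity), ENNReal.ofReal_mul (by positivity),
      ENNReal.ofReal_mul hA₁]
  · refine (ENNReal.ofReal_le_ofReal ((le_of_eq (by ring)).trans h₂)).trans_eq ?_
    rw [ENNReal.ofReal_mul (by positivity), ENNReal.ofReal_mul (by positivity),
      ENNReal.ofReal_mul hA₂]
    ring

section Pointwise

variable {m : ℕ → ℝ} {β ρ ρs σ σs r s : ℝ} {h g : FormalHam}

/-- The summation index `(q, l', α')` of `{h,g}^{[l]}_α` determines the monomials
`(l', α')` of `h` and `(l'', α'') = (l - l', α + 𝟙_q - α')` of `g` that it pairs. -/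
def bracketSplit (p : MonoIdx) (x : ℕ × MonoIdx) : ℕ × MonoIdx × MonoIdx :=
  (x.1, x.2, (p.1 - x.2.1, p.2 + Finsupp.single x.1 1 - x.2.2))

def bracketMajorant (m : ℕ → ℝ) (β ρ ρs σ σs r s : ℝ) (h g : FormalHam) (j : ℕ)
    (y : ℕ × MonoIdx × MonoIdx) : ℝ≥0∞ :=
  pairWeight m β y.1 j (topIdx y.2.1) (topIdx y.2.2) *
    (ENNReal.ofReal (angleFactor s y.1 y.2.1.1) * hamDensity m β ρ σ h y.2.1 *
        (ENNReal.ofReal (actionFactor (ρ - r) ρs y.1 y.2.2.2) * hamDensity m β ρs σs g y.2.2) +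
      ENNReal.ofReal (actionFactor (ρ - r) ρ y.1 y.2.1.2) * hamDensity m β ρ σ h y.2.1 *
        (ENNReal.ofReal (angleFactor (σs - σ + s) y.1 y.2.2.1) * hamDensity m β ρs σs g y.2.2))

lemma norm_bracketTerm_le {q : ℕ} (hm : 0 ≤ m q) (l l' : ℕ →₀ ℤ) (α α' : ℕ →₀ ℕ) :
    ‖bracketTerm m h g l α (q, l', α')‖ ≤
      (m q)⁻¹ * ((l' q).natAbs * (α + Finsupp.single q 1 - α' : ℕ →₀ ℕ) q +
        α' q * ((l - l') q).natAbs) *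
        (‖h l' α'‖ * ‖g (l - l') (α + Finsupp.single q 1 - α')‖) := by
  unfold bracketTerm
  split_ifs
  · simp only [norm_mul, norm_inv, Complex.norm_real, Real.norm_of_nonneg hm]
    rw [mul_assoc _ ‖h l' α'‖]
    gcongr
    refine (norm_sub_le _ _).trans_eq ?_
    simp only [norm_mul, Complex.norm_intCast, Complex.norm_natCast, Nat.cast_natAbs, Int.cast_abs]
  · rw [norm_zero]
    positivity

lemma monoWeight_nonneg (hm0 : ∀ i, 0 ≤ m i) {ρ : ℝ} (hρ : 0 ≤ ρ) (σ : ℝ) (p : MonoIdx) :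
    0 ≤ monoWeight m β ρ σ p := by
  have := massWeight_nonneg (β := β) hm0 (hSupp p.1 p.2)
  unfold monoWeight
  positivity

lemma ofReal_monoWeight_mul_le_bracketMajorant (hpos : ∀ i, 0 < m i) (hm1 : ∀ i, m i ≤ 1)
    (hanti : Antitone m) (hβ : 0 ≤ β) (hr : 0 ≤ r) (hrρ : r < ρ) (hρρs : ρ ≤ ρs) (hs : 0 ≤ s)
    (hsσ : s ≤ σ) (hσσs : σ ≤ σs) {l l' l'' : ℕ →₀ ℤ} {α α' α'' : ℕ →₀ ℕ} {q : ℕ}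
    (hl : l = l' + l'') (hα : α + Finsupp.single q 1 = α' + α'') :
    ENNReal.ofReal (monoWeight m β (ρ - r) (σ - s) (l, α)) *
        (ENNReal.ofReal ((m q)⁻¹ * ((l' q).natAbs * α'' q + α' q * (l'' q).natAbs)) *
          (‖h l' α'‖ₑ * ‖g l'' α''‖ₑ)) ≤
      ENNReal.ofReal (m (topIdx (l, α))) *
        bracketMajorant m β ρ ρs σ σs r s h g (topIdx (l, α)) (q, (l', α'), (l'', α'')) := by
  have hm0 : ∀ i, 0 ≤ m i := fun i => (hpos i).le
  set κ : ℝ := (l' q).natAbs * α'' q + α' q * (l'' q).natAbs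
  by_cases hκ : κ = 0
  · simp [hκ]
  have hq' : q ∈ hSupp l' α' := by
    rw [mem_hSupp]; by_contra! hq; exact hκ (by simp [κ, hq.1, hq.2])
  have hq'' : q ∈ hSupp l'' α'' := by
    rw [mem_hSupp]; by_contra! hq; exact hκ (by simp [κ, hq.1, hq.2])
  have hW := ofReal_massWeight_mul_inv_le hpos hm1 hanti hβ (hSupp_subset_union hl hα) hq' hq''
  have hw := massWeight_nonneg (β := β) hm0 (hSupp l α)
  calc _ = ENNReal.ofReal (massWeight m β (hSupp l α) * (m q)⁻¹) *
          ENNReal.ofReal ((ρ - r) ^ a1 α * Real.exp ((σ - s) * l1 l) * κ) *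
          (‖h l' α'‖ₑ * ‖g l'' α''‖ₑ) := by
        rw [← mul_assoc, ← ENNReal.ofReal_mul (monoWeight_nonneg hm0 (by linarith) _ _),
          ← ENNReal.ofReal_mul (mul_nonneg hw (inv_nonneg.2 (hm0 q))), monoWeight]
        ring_nf
    _ ≤ ENNReal.ofReal (m (topIdx (l, α))) *
          pairWeight m β q (topIdx (l, α)) (topIdx (l', α')) (topIdx (l'', α'')) *
          ENNReal.ofReal (massWeight m β (hSupp l' α')) *
          ENNReal.ofReal (massWeight m β (hSupp l'' α'')) *
          ((ENNReal.ofReal (angleFactor s q l') * ENNReal.ofReal (actionFactor (ρ - r) ρs q α'') +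
            ENNReal.ofReal (actionFactor (ρ - r) ρ q α') *
              ENNReal.ofReal (angleFactor (σs - σ + s) q l'')) *
            ENNReal.ofReal (ρ ^ a1 α' * Real.exp (σ * l1 l')) *
            ENNReal.ofReal (ρs ^ a1 α'' * Real.exp (σs * l1 l''))) *
          (‖h l' α'‖ₑ * ‖g l'' α''‖ₑ) := by
        gcongr
        · exact hW
        · exact ofReal_pow_mul_exp_mul_le hr hrρ hρρs hs hsσ hσσs hl hα
    _ = _ := by
        rw [bracketMajorant, hamDensity_eq ⟨q, hq'⟩, hamDensity_eq ⟨q, hq''⟩, monoWeight,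
          monoWeight, ENNReal.ofReal_mul (massWeight_nonneg hm0 _),
          ENNReal.ofReal_mul (massWeight_nonneg hm0 _)]
        ring

lemma ofReal_monoWeight_mul_enorm_bracketTerm_le (hpos : ∀ i, 0 < m i) (hm1 : ∀ i, m i ≤ 1)
    (hanti : Antitone m) (hβ : 0 ≤ β) (hr : 0 ≤ r) (hrρ : r < ρ) (hρρs : ρ ≤ ρs) (hs : 0 ≤ s)
    (hsσ : s ≤ σ) (hσσs : σ ≤ σs) (p : MonoIdx) (x : ℕ × MonoIdx) :
    ENNReal.ofReal (monoWeight m β (ρ - r) (σ - s) p) * ‖bracketTerm m h g p.1 p.2 x‖ₑ ≤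
      ENNReal.ofReal (m (topIdx p)) *
        bracketMajorant m β ρ ρs σ σs r s h g (topIdx p) (bracketSplit p x) := by
  obtain ⟨l, α⟩ := p
  obtain ⟨q, l', α'⟩ := x
  by_cases hx : α' ≤ α + Finsupp.single q 1
  swap
  · simp [bracketTerm, hx]
  refine (mul_le_mul_right ?_ _).trans (ofReal_monoWeight_mul_le_bracketMajorant hpos hm1 hanti
    hβ hr hrρ hρρs hs hsσ hσσs (l'' := l - l') (by abel) (add_tsub_cancel_of_le hx).symm)
  have hq := (hpos q).le
  rw [← ofReal_norm, ← ofReal_norm, ← ofReal_norm, ← ENNReal.ofReal_mul (by positivity),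
    ← ENNReal.ofReal_mul (by positivity)]
  exact ENNReal.ofReal_le_ofReal (norm_bracketTerm_le hq l l' α α')

end Pointwise

section Summation

variable {m : ℕ → ℝ} {β : ℝ}

lemma tsum_transferWeight_mul_le_Sbeta (hpos : ∀ i, 0 < m i) (q : ℕ) :
    ∑' k, transferWeight m β q k * ENNReal.ofReal (m k) ≤ Sbeta m β := by
  have hterm : ∀ k, transferWeight m β q k * ENNReal.ofReal (m k) =
      if q ≤ k then ENNReal.ofReal ((m k / m q) ^ (1 - β)) else 0 := fun k => by
    unfold transferWeight
    split_ifs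
    · rw [← ENNReal.ofReal_mul
        (div_nonneg (Real.rpow_nonneg (div_nonneg (hpos k).le (hpos q).le) _) (hpos k).le),
        div_mul_cancel₀ _ (hpos k).ne']
    · rw [zero_mul]
  have hsupp : Function.support (fun k => transferWeight m β q k * ENNReal.ofReal (m k)) ⊆
      Set.range (q + ·) := fun k hk => by
    by_contra hk'
    refine hk ((hterm k).trans (if_neg fun hqk => hk' ⟨k - q, ?_⟩))
    simp only
    omega
  rw [← (add_right_injective q).tsum_eq hsupp]
  simp only [hterm, le_add_iff_nonneg_right, zero_le, if_true]
  exact le_iSup (fun q => ∑' n, ENNReal.ofReal ((m (q + n) / m q) ^ (1 - β))) q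

variable {P : Type*} (J : P → ℕ)

lemma tsum_transferWeight_mul_le (hpos : ∀ i, 0 < m i) {T : ℕ → P → ℝ≥0∞} {N : ℝ≥0∞}
    (hT : ∀ k, ∑' p, T k p ≤ ENNReal.ofReal (m k) * N) {a : P → ℝ≥0∞} {K : ℝ≥0∞}
    (ha : ∀ p, a p ≤ K * T (J p) p) (q : ℕ) :
    ∑' p, transferWeight m β q (J p) * a p ≤ K * Sbeta m β * N :=
  calc ∑' p, transferWeight m β q (J p) * a p
      ≤ ∑' p, ∑' k, transferWeight m β q k * (K * T k p) :=
        ENNReal.tsum_le_tsum fun p => (mul_le_mul_right (ha p) _).trans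
          (ENNReal.le_tsum (f := fun k => transferWeight m β q k * (K * T k p)) (J p))
    _ = ∑' k, transferWeight m β q k * K * ∑' p, T k p := by
        rw [ENNReal.tsum_comm]
        simp_rw [← ENNReal.tsum_mul_left, mul_assoc]
    _ ≤ ∑' k, transferWeight m β q k * K * (ENNReal.ofReal (m k) * N) := by
        gcongr
        exact hT _
    _ = K * (∑' k, transferWeight m β q k * ENNReal.ofReal (m k)) * N := by
        rw [← ENNReal.tsum_mul_left, ← ENNReal.tsum_mul_right]
        exact tsum_congr fun k => by ring
    _ ≤ K * Sbeta m β * N := by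
        gcongr
        exact tsum_transferWeight_mul_le_Sbeta hpos q

lemma tsum_transferWeight_mul_transferWeight_le (hpos : ∀ i, 0 < m i)
    {T₁ T₂ : ℕ → P → ℝ≥0∞} {N₁ N₂ K₁ K₂ : ℝ≥0∞}
    (hT₁ : ∀ k, ∑' p, T₁ k p ≤ ENNReal.ofReal (m k) * N₁)
    (hT₂ : ∀ k, ∑' p, T₂ k p ≤ ENNReal.ofReal (m k) * N₂) {a b : ℕ → P → ℝ≥0∞}
    (ha : ∀ p, ∑' q, a q p ≤ K₁ * T₁ (J p) p) (hb : ∀ p, ∑' q, b q p ≤ K₂ * T₂ (J p) p)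
    (j : ℕ) :
    ∑' q, ∑' p₁, ∑' p₂, transferWeight m β q (J p₁) * transferWeight m β j (J p₂) *
      (a q p₁ * b q p₂) ≤ K₁ * K₂ * Sbeta m β ^ 2 * (N₁ * N₂) :=
  calc ∑' q, ∑' p₁, ∑' p₂, transferWeight m β q (J p₁) * transferWeight m β j (J p₂) *
        (a q p₁ * b q p₂)
      = ∑' p₂, ∑' q, transferWeight m β j (J p₂) * b q p₂ *
          ∑' p₁, transferWeight m β q (J p₁) * a q p₁ := by
        calc _ = ∑' q, ∑' p₂, ∑' p₁, transferWeight m β j (J p₂) * b q p₂ *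
              (transferWeight m β q (J p₁) * a q p₁) := tsum_congr fun q => by
                rw [ENNReal.tsum_comm]
                exact tsum_congr fun p₂ => tsum_congr fun p₁ => by ring
          _ = _ := by
                rw [ENNReal.tsum_comm]
                simp_rw [ENNReal.tsum_mul_left]
    _ ≤ ∑' p₂, ∑' q, transferWeight m β j (J p₂) * b q p₂ * (K₁ * Sbeta m β * N₁) := by
        gcongr with p₂ q
        exact tsum_transferWeight_mul_le J hpos hT₁ (fun p => (ENNReal.le_tsum q).trans (ha p)) q
    _ = (∑' p₂, transferWeight m β j (J p₂) * ∑' q, b q p₂) * (K₁ * Sbeta m β * N₁) := by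
        simp_rw [ENNReal.tsum_mul_right, ENNReal.tsum_mul_left]
    _ ≤ K₂ * Sbeta m β * N₂ * (K₁ * Sbeta m β * N₁) := by
        gcongr
        exact tsum_transferWeight_mul_le J hpos hT₂ hb j
    _ = K₁ * K₂ * Sbeta m β ^ 2 * (N₁ * N₂) := by ring

lemma tsum_pairWeight_mul_le (hpos : ∀ i, 0 < m i)
    {T₁ T₂ : ℕ → P → ℝ≥0∞} {N₁ N₂ K₁ K₂ : ℝ≥0∞}
    (hT₁ : ∀ k, ∑' p, T₁ k p ≤ ENNReal.ofReal (m k) * N₁)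
    (hT₂ : ∀ k, ∑' p, T₂ k p ≤ ENNReal.ofReal (m k) * N₂) {a b : ℕ → P → ℝ≥0∞}
    (ha : ∀ p, ∑' q, a q p ≤ K₁ * T₁ (J p) p) (hb : ∀ p, ∑' q, b q p ≤ K₂ * T₂ (J p) p)
    (j : ℕ) :
    ∑' y : ℕ × P × P, pairWeight m β y.1 j (J y.2.1) (J y.2.2) * (a y.1 y.2.1 * b y.1 y.2.2) ≤
      2 * (K₁ * K₂ * Sbeta m β ^ 2 * (N₁ * N₂)) := by
  simp only [ENNReal.tsum_prod', pairWeight, add_mul, ENNReal.tsum_add]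
  rw [two_mul]
  gcongr ?_ + ?_
  · exact tsum_transferWeight_mul_transferWeight_le J hpos hT₁ hT₂ ha hb j
  · calc _ = ∑' q, ∑' p₂, ∑' p₁, transferWeight m β q (J p₂) * transferWeight m β j (J p₁) *
            (b q p₂ * a q p₁) := by
          refine tsum_congr fun q => ?_
          rw [ENNReal.tsum_comm]
          exact tsum_congr fun p₂ => tsum_congr fun p₁ => by ring
      _ ≤ K₂ * K₁ * Sbeta m β ^ 2 * (N₂ * N₁) :=
          tsum_transferWeight_mul_transferWeight_le J hpos hT₂ hT₁ hb ha j
      _ = K₁ * K₂ * Sbeta m β ^ 2 * (N₁ * N₂) := by ring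

end Summation

section Bracket

variable {m : ℕ → ℝ} {β ρ ρs σ σs r s : ℝ} {h g : FormalHam}

lemma tsum_bracketMajorant_le (hpos : ∀ i, 0 < m i) (hr : 0 < r) (hrρ : r < ρ)
    (hρρs : ρ ≤ ρs) (hs : 0 < s) (hσσs : σ ≤ σs) (j : ℕ) :
    ∑' y, bracketMajorant m β ρ ρs σ σs r s h g j y ≤
      4 * ENNReal.ofReal (max (1 / (r * (σs - σ + s))) (1 / (s * (ρs - ρ + r)))) *
        Sbeta m β ^ 2 * (hamNorm m β ρ σ h * hamNorm m β ρs σs g) := by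
  set M := max (1 / (r * (σs - σ + s))) (1 / (s * (ρs - ρ + r)))
  have hTh := fun k => (hamNorm_le_iff (β := β) (ρ := ρ) (σ := σ) (h := h) hpos).1 le_rfl k
  have hTg := fun k => (hamNorm_le_iff (β := β) (ρ := ρs) (σ := σs) (h := g) hpos).1 le_rfl k
  have hprice : ∀ {f : ℕ → ℝ} {K : ℝ} (D : ℝ≥0∞), ∑' q, ENNReal.ofReal (f q) ≤ ENNReal.ofReal K →
      ∑' q, ENNReal.ofReal (f q) * D ≤ ENNReal.ofReal K * D := fun D hf => by
    rw [ENNReal.tsum_mul_right]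
    gcongr
  have hρ : 0 ≤ ρ - r := by linarith
  have h₁ := tsum_pairWeight_mul_le (β := β) topIdx hpos hTh hTg
    (a := fun q p => ENNReal.ofReal (angleFactor s q p.1) * hamDensity m β ρ σ h p)
    (b := fun q p => ENNReal.ofReal (actionFactor (ρ - r) ρs q p.2) * hamDensity m β ρs σs g p)
    (fun p => hprice _ (tsum_ofReal_angleFactor_le hs p.1))
    (fun p => hprice _ (tsum_ofReal_actionFactor_le hρ (by linarith) p.2)) j
  have h₂ := tsum_pairWeight_mul_le (β := β) topIdx hpos hTh hTg
    (a := fun q p => ENNReal.ofReal (actionFactor (ρ - r) ρ q p.2) * hamDensity m β ρ σ h p)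
    (b := fun q p =>
      ENNReal.ofReal (angleFactor (σs - σ + s) q p.1) * hamDensity m β ρs σs g p)
    (fun p => hprice _ (tsum_ofReal_actionFactor_le hρ (by linarith) p.2))
    (fun p => hprice _ (tsum_ofReal_angleFactor_le (by linarith) p.1)) j
  have hK : ∀ {x y : ℝ}, 0 < x → 1 / (x * y) ≤ M →
      ENNReal.ofReal x⁻¹ * ENNReal.ofReal y⁻¹ ≤ ENNReal.ofReal M := fun hx hxy => by
    rw [← ENNReal.ofReal_mul (inv_nonneg.2 hx.le), ← mul_inv, ← one_div]
    exact ENNReal.ofReal_le_ofReal hxy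
  calc ∑' y, bracketMajorant m β ρ ρs σ σs r s h g j y
      = _ := by simp only [bracketMajorant, mul_add, ENNReal.tsum_add]
    _ ≤ _ := add_le_add h₁ h₂
    _ ≤ 2 * (ENNReal.ofReal M * Sbeta m β ^ 2 * (hamNorm m β ρ σ h * hamNorm m β ρs σs g)) +
        2 * (ENNReal.ofReal M * Sbeta m β ^ 2 * (hamNorm m β ρ σ h * hamNorm m β ρs σs g)) := by
      gcongr
      · exact hK hs (by rw [show ρs - (ρ - r) = ρs - ρ + r by ring]; exact le_max_right _ _)
      · exact hK (by linarith) (by rw [show ρ - (ρ - r) = r by ring]; exact le_max_left _ _)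
    _ = _ := by ring

lemma tsum_indicator_comp_le_of_injOn {α γ : Type*} {f : α → γ} {t : Set α} (hf : t.InjOn f)
    (G : γ → ℝ≥0∞) : ∑' a, t.indicator (fun a => G (f a)) a ≤ ∑' c, G c := by
  rw [← _root_.tsum_subtype]
  exact ENNReal.tsum_comp_le_tsum_of_injective (Set.injOn_iff_injective.1 hf) G

lemma bracketSplit_injOn : Set.InjOn (fun z : MonoIdx × (ℕ × MonoIdx) => bracketSplit z.1 z.2)
    {z | z.2.2.2 ≤ z.1.2 + Finsupp.single z.2.1 1} := by
  rintro ⟨⟨l₁, α₁⟩, q, l', α'⟩ h₁ ⟨⟨l₂, α₂⟩, q₂, l₂', α₂'⟩ h₂ heq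
  simp only [bracketSplit, Prod.mk.injEq] at heq
  obtain ⟨rfl, ⟨rfl, rfl⟩, hl, hα⟩ := heq
  have hl₁₂ : l₁ = l₂ := by simpa using congrArg (· + l') hl
  have hα₁₂ : α₁ = α₂ := by
    refine add_right_cancel (b := Finsupp.single q 1) ?_
    rw [← add_tsub_cancel_of_le (show α' ≤ α₁ + Finsupp.single q 1 from h₁),
      ← add_tsub_cancel_of_le (show α' ≤ α₂ + Finsupp.single q 1 from h₂)]
    exact congrArg (α' + ·) hα
  rw [hl₁₂, hα₁₂]

lemma hamTerm_bracket_le (j : ℕ) (p : MonoIdx) :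
    hamTerm m β ρ σ (bracket m h g) j p ≤ if topIdx p = j then
      ∑' x, ENNReal.ofReal (monoWeight m β ρ σ p) * ‖bracketTerm m h g p.1 p.2 x‖ₑ else 0 := by
  rw [hamTerm_eq]
  split_ifs with hmax hj
  · rw [ENNReal.tsum_mul_left, bracket, ← ofReal_norm, norm_mul, Complex.norm_I, one_mul,
      ofReal_norm]
    gcongr
    exact enorm_tsum_le_tsum_enorm
  · exact absurd (sup_id_eq_of_max_eq hmax) hj
  all_goals exact zero_le

lemma tsum_ite_tsum_bracketTerm_le (hpos : ∀ i, 0 < m i) (hm1 : ∀ i, m i ≤ 1) (hanti : Antitone m)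
    (hβ : 0 ≤ β) (hr : 0 ≤ r) (hrρ : r < ρ) (hρρs : ρ ≤ ρs) (hs : 0 ≤ s) (hsσ : s ≤ σ)
    (hσσs : σ ≤ σs) (j : ℕ) :
    ∑' p, (if topIdx p = j then ∑' x, ENNReal.ofReal (monoWeight m β (ρ - r) (σ - s) p) *
        ‖bracketTerm m h g p.1 p.2 x‖ₑ else 0) ≤
      ENNReal.ofReal (m j) * ∑' y, bracketMajorant m β ρ ρs σ σs r s h g j y := by
  set E := fun (p : MonoIdx) (x : ℕ × MonoIdx) =>
    ENNReal.ofReal (monoWeight m β (ρ - r) (σ - s) p) * ‖bracketTerm m h g p.1 p.2 x‖ₑ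
  set good := {z : MonoIdx × (ℕ × MonoIdx) | z.2.2.2 ≤ z.1.2 + Finsupp.single z.2.1 1}
  have hpt : ∀ z : MonoIdx × (ℕ × MonoIdx), (if topIdx z.1 = j then E z.1 z.2 else 0) ≤
      good.indicator (fun z => ENNReal.ofReal (m j) *
        bracketMajorant m β ρ ρs σ σs r s h g j (bracketSplit z.1 z.2)) z := by
    rintro ⟨p, x⟩
    split_ifs with hj
    · by_cases hx : (p, x) ∈ good
      · rw [Set.indicator_of_mem hx, ← hj]
        exact ofReal_monoWeight_mul_enorm_bracketTerm_le hpos hm1 hanti hβ hr hrρ hρρs hs hsσ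
          hσσs p x
      · simp [E, bracketTerm, show ¬ x.2.2 ≤ p.2 + Finsupp.single x.1 1 from hx]
    · exact zero_le
  calc ∑' p, (if topIdx p = j then ∑' x, E p x else 0)
      = ∑' z : MonoIdx × (ℕ × MonoIdx), if topIdx z.1 = j then E z.1 z.2 else 0 := by
        rw [ENNReal.tsum_prod' (f := fun z : MonoIdx × (ℕ × MonoIdx) =>
          if topIdx z.1 = j then E z.1 z.2 else 0)]
        exact tsum_congr fun p => by by_cases hj : topIdx p = j <;> simp [hj]
    _ ≤ ∑' z, good.indicator (fun z => ENNReal.ofReal (m j) *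
          bracketMajorant m β ρ ρs σ σs r s h g j (bracketSplit z.1 z.2)) z :=
        ENNReal.tsum_le_tsum hpt
    _ ≤ ∑' y, ENNReal.ofReal (m j) * bracketMajorant m β ρ ρs σ σs r s h g j y :=
        tsum_indicator_comp_le_of_injOn bracketSplit_injOn _
    _ = ENNReal.ofReal (m j) * ∑' y, bracketMajorant m β ρ ρs σ σs r s h g j y :=
        ENNReal.tsum_mul_left

theorem hamNorm_bracket_le (hpos : ∀ i, 0 < m i) (hm1 : ∀ i, m i ≤ 1) (hanti : Antitone m)
    (hβ : 0 ≤ β) (hr : 0 < r) (hrρ : r < ρ) (hρρs : ρ ≤ ρs) (hs : 0 < s) (hsσ : s ≤ σ)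
    (hσσs : σ ≤ σs) :
    hamNorm m β (ρ - r) (σ - s) (bracket m h g) ≤
      4 * ENNReal.ofReal (max (1 / (r * (σs - σ + s))) (1 / (s * (ρs - ρ + r)))) *
        Sbeta m β ^ 2 * (hamNorm m β ρ σ h * hamNorm m β ρs σs g) :=
  (hamNorm_le_iff hpos).2 fun j =>
    (ENNReal.tsum_le_tsum fun p => hamTerm_bracket_le j p).trans <|
      (tsum_ite_tsum_bracketTerm_le hpos hm1 hanti hβ hr.le hrρ hρρs hs.le hsσ hσσs j).trans <|
        mul_le_mul_right (tsum_bracketMajorant_le hpos hr hrρ hρρs hs hσσs j) _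

theorem summable_bracketTerm (hpos : ∀ i, 0 < m i) (hm1 : ∀ i, m i ≤ 1) (hanti : Antitone m)
    (hβ : 0 ≤ β) (hr : 0 < r) (hrρ : r < ρ) (hρρs : ρ ≤ ρs) (hs : 0 < s) (hsσ : s ≤ σ)
    (hσσs : σ ≤ σs) (hh : hamNorm m β ρ σ h ≠ ⊤) (hg : hamNorm m β ρs σs g ≠ ⊤)
    (hS : Sbeta m β ≠ ⊤) (l : ℕ →₀ ℤ) (α : ℕ →₀ ℕ) :
    Summable (bracketTerm m h g l α) := by
  set p : MonoIdx := (l, α)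
  have hw : 0 < monoWeight m β (ρ - r) (σ - s) p := by
    have := Real.rpow_pos_of_pos (prod_pos fun i _ => hpos i : 0 < mProd m
      ((hSupp l α).erase ((hSupp l α).sup id))) (-β)
    have : 0 < ρ - r := by linarith
    unfold monoWeight massWeight
    positivity
  have hbound : ENNReal.ofReal (monoWeight m β (ρ - r) (σ - s) p) *
      ∑' x, ‖bracketTerm m h g l α x‖ₑ ≤ ENNReal.ofReal (m (topIdx p)) *
        (4 * ENNReal.ofReal (max (1 / (r * (σs - σ + s))) (1 / (s * (ρs - ρ + r)))) *
          Sbeta m β ^ 2 * (hamNorm m β ρ σ h * hamNorm m β ρs σs g)) := by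
    rw [← ENNReal.tsum_mul_left]
    have hblock := tsum_ite_tsum_bracketTerm_le (h := h) (g := g) hpos hm1 hanti hβ hr.le hrρ
      hρρs hs.le hsσ hσσs (topIdx p)
    have hmaj := tsum_bracketMajorant_le (β := β) (h := h) (g := g) hpos hr hrρ hρρs hs hσσs
      (topIdx p)
    refine le_trans ?_ (hblock.trans (mul_le_mul_right hmaj _))
    exact (if_pos rfl).symm.le.trans (ENNReal.le_tsum p)
  have hfin : ∑' x, ‖bracketTerm m h g l α x‖ₑ ≠ ⊤ := by
    intro htop
    rw [htop, ENNReal.mul_top (ENNReal.ofReal_pos.2 hw).ne'] at hbound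
    refine (ENNReal.mul_ne_top ENNReal.ofReal_ne_top ?_) (top_le_iff.1 hbound)
    finiteness
  exact (tsum_enorm_ne_top_iff_summable_norm.1 hfin).of_norm

end Bracket

end BracketEstimate

theorem bracket_estimate (S : ℝ) :
    ∃ c : ℝ, 0 < c ∧
      ∀ (κ M : ℝ), 0 < κ → 1 ≤ M → ∀ m : ℕ → ℝ, IsMassSeq κ M m →
      ∀ β : ℝ, β ∈ Set.Ioo (0 : ℝ) 1 → Sbeta m β ≤ ENNReal.ofReal S →
      ∀ ρ ρs σ σs r s : ℝ,
        0 < ρ → ρ ≤ ρs → 0 < σ → σ ≤ σs → 0 < r → r < ρ → 0 < s → s < σ →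
      ∀ h g : FormalHam,
        hamNorm m β ρ σ h ≠ ⊤ → hamNorm m β ρs σs g ≠ ⊤ →
        (∀ l α, Summable (bracketTerm m h g l α)) ∧
        hamNorm m β (ρ - r) (σ - s) (bracket m h g) ≤
          ENNReal.ofReal (c * max (1 / (r * (σs - σ + s))) (1 / (s * (ρs - ρ + r)))) *
            (hamNorm m β ρ σ h * hamNorm m β ρs σs g) := by
  refine ⟨4 * S ^ 2 + 1, by positivity, ?_⟩
  intro κ M _ _ m hm β hβ hSβ ρ ρs σ σs r s _ hρρs _ hσσs hr hrρ hs hsσ h g hh hg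
  have hS : Sbeta m β ≤ ENNReal.ofReal |S| :=
    hSβ.trans (ENNReal.ofReal_le_ofReal (le_abs_self S))
  set K := max (1 / (r * (σs - σ + s))) (1 / (s * (ρs - ρ + r)))
  have hK : 0 ≤ K := le_max_of_le_right (one_div_nonneg.2 (by nlinarith))
  have hc : 4 * ENNReal.ofReal K * Sbeta m β ^ 2 ≤ ENNReal.ofReal ((4 * S ^ 2 + 1) * K) :=
    calc 4 * ENNReal.ofReal K * Sbeta m β ^ 2
        ≤ 4 * ENNReal.ofReal K * ENNReal.ofReal |S| ^ 2 := by gcongr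
      _ = ENNReal.ofReal (4 * S ^ 2 * K) := by
          rw [← ENNReal.ofReal_pow (abs_nonneg S), sq_abs, ← ENNReal.ofReal_ofNat 4,
            ← ENNReal.ofReal_mul (by norm_num), ← ENNReal.ofReal_mul (by positivity)]
          ring_nf
      _ ≤ ENNReal.ofReal ((4 * S ^ 2 + 1) * K) := ENNReal.ofReal_le_ofReal (by nlinarith)
  have hsum := BracketEstimate.summable_bracketTerm hm.pos hm.le_one hm.anti hβ.1.le hr hrρ hρρs
    hs hsσ.le hσσs hh hg (ne_top_of_le_ne_top ENNReal.ofReal_ne_top hS)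
  have hnorm := BracketEstimate.hamNorm_bracket_le (h := h) (g := g) hm.pos hm.le_one hm.anti
    hβ.1.le hr hrρ hρρs hs hsσ.le hσσs
  exact ⟨hsum, hnorm.trans (mul_le_mul_left hc _)⟩
end
end

section
/- There exist ε* ∈ (0,1) and c > 0, depending only on κ, M, β₀ and σ₀, such that if ε₀ ≤ ε*, then for every n ≥ 1 the collection 𝔸_n is a finite set of finite subsets of ℕ and Σ_{A ∈ 𝔸_n} L_n^{2|A|+1} ≤ c · exp( |log ε_n|^{4/5} ). -/
/-!
Common setting: mass sequences, inductive KAM constants ε_n, σ_n, L_n,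
the collections 𝔸_n of finite sets, and the Diophantine sets 𝒪_n.
-/

open scoped ENNReal NNReal BigOperators Classical

noncomputable section

/-- `ε_n`, defined by `ε_{n+1} = ε_n^{5/4}`. -/
def eps (ε₀ : ℝ) : ℕ → ℝ
  | 0 => ε₀
  | n + 1 => eps ε₀ n ^ (5 / 4 : ℝ)

/-- `s_n = σ₀/(8n²)` (for `n ≥ 1`). -/
def sn (σ₀ : ℝ) (n : ℕ) : ℝ := σ₀ / (8 * (n : ℝ) ^ 2)

/-- `σ_n`: `σ₁ = σ₀`, `σ_{n+1} = σ_n − 2 s_n` for `n ≥ 1`. -/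
def sig (σ₀ : ℝ) : ℕ → ℝ
  | 0 => σ₀
  | n + 1 => if n = 0 then σ₀ else sig σ₀ n - 2 * sn σ₀ n

/-- `L_n = σ_n^{-1} |log(ε_{n+1}/ε_n)|`. -/
def Ln (σ₀ ε₀ : ℝ) (n : ℕ) : ℝ := |Real.log (eps ε₀ (n + 1) / eps ε₀ n)| / sig σ₀ n

/-- `μ_n = β₀/(8n²)` (for `n ≥ 1`). -/
def mun (β₀ : ℝ) (n : ℕ) : ℝ := β₀ / (8 * (n : ℝ) ^ 2)

/-- `𝔸_n = {A finite : (m_A)^{μ_n} ≥ ε_{n+1}/ε_n}`. -/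
def An (m : ℕ → ℝ) (β₀ ε₀ : ℝ) (n : ℕ) : Set (Finset ℕ) :=
  {A | eps ε₀ (n + 1) / eps ε₀ n ≤ mProd m A ^ mun β₀ n}

/-- `𝒪_n`: the set of `ξ ∈ [a,b]^ℕ` such that `|Σ_{j∈A} l_j ξ_j| ≥ ε_n^{1/12}` for every
finite `A ⊆ ℕ` with `A̲ ∈ 𝔸_n` and every integer vector `l` supported in `A` with
`0 < |l|₁ ≤ L_n`. -/
def DiophSet (m : ℕ → ℝ) (β₀ σ₀ ε₀ a b : ℝ) (n : ℕ) : Set (ℕ → ℝ) :=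
  {ξ | (∀ j, ξ j ∈ Set.Icc a b) ∧
    ∀ A : Finset ℕ, under A ∈ An m β₀ ε₀ n →
      ∀ l : ℕ → ℤ, (∀ j, l j ≠ 0 → j ∈ A) →
        0 < ∑ j ∈ A, (l j).natAbs →
        ((∑ j ∈ A, (l j).natAbs : ℕ) : ℝ) ≤ Ln σ₀ ε₀ n →
        eps ε₀ n ^ (1 / 12 : ℝ) ≤ |∑ j ∈ A, (l j : ℝ) * ξ j|}

/-!
A set `A ∈ 𝔸_n` satisfies `-log m_A ≤ 2n²|log ε_n|/β₀`, and `-log m_i ≥ κ i - log M` gives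
`κ ∑_{i ∈ A} i ≤ -log m_A + |A| log M`. Since `∑_{i ∈ A} i ≥ |A|(|A| - 1)/2`, the set `A` has
`O(n |log ε_n|^{1/2})` elements, all of size `O(n² |log ε_n|)`. Writing `|log ε_n| = u¹⁰`, the
identity `|log ε_n| = (5/4)ⁿ |log ε₀|` gives `n ≤ 50u`, so `A` is one of the at most
`(K+1)(N+1)^K` subsets of `{0, …, N}` with at most `K` elements, where `K = O(u⁶)` and
`N = O(u¹²)`. As `L_n = O(u¹⁰)`, the whole sum is `exp(O(u⁷))`, which is below
`exp(u⁸) = exp(|log ε_n|^{4/5})` once `ε₀` is small.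
-/

open Finset Real

lemma eps_pos {ε₀ : ℝ} (h : 0 < ε₀) (n : ℕ) : 0 < eps ε₀ n := by
  induction n with
  | zero => exact h
  | succ n ih => exact rpow_pos_of_pos ih _

lemma abs_log_eps {ε₀ : ℝ} (h : 0 < ε₀) (n : ℕ) :
    |log (eps ε₀ n)| = (5 / 4) ^ n * |log ε₀| := by
  induction n with
  | zero => simp [eps]
  | succ n ih =>
    rw [eps, log_rpow (eps_pos h n), abs_mul, ih, pow_succ,
      abs_of_pos (by norm_num : (0 : ℝ) < 5 / 4)]
    ring

lemma eps_succ_div_eps {ε₀ : ℝ} (h : 0 < ε₀) (n : ℕ) :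
    eps ε₀ (n + 1) / eps ε₀ n = eps ε₀ n ^ (1 / 4 : ℝ) := by
  rw [eps, div_eq_iff (eps_pos h n).ne', ← rpow_add_one (eps_pos h n).ne']
  norm_num

lemma sig_eq_sub_sum (σ₀ : ℝ) (n : ℕ) :
    sig σ₀ n = σ₀ - σ₀ / 4 * ∑ i ∈ Ioo 0 n, ((i : ℝ) ^ 2)⁻¹ := by
  induction n with
  | zero => simp [sig]
  | succ n ih =>
    rw [Ioo_add_one_right_eq_Ioc]
    rcases n.eq_zero_or_pos with rfl | hn
    · simp [sig]
    rw [sig, if_neg hn.ne', ih, ← Ioo_insert_right hn, sum_insert (by simp), sn]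
    field_simp
    ring

lemma sig_le {σ₀ : ℝ} (h : 0 ≤ σ₀) (n : ℕ) : sig σ₀ n ≤ σ₀ := by
  have : 0 ≤ ∑ i ∈ Ioo 0 n, ((i : ℝ) ^ 2)⁻¹ := sum_nonneg fun i _ => by positivity
  rw [sig_eq_sub_sum]
  nlinarith

lemma half_le_sig {σ₀ : ℝ} (h : 0 ≤ σ₀) (n : ℕ) : σ₀ / 2 ≤ sig σ₀ n := by
  have := sum_Ioo_inv_sq_le (α := ℝ) 0 n
  norm_num at this
  rw [sig_eq_sub_sum]
  nlinarith

lemma Ln_eq {σ₀ ε₀ : ℝ} (h : 0 < ε₀) (n : ℕ) :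
    Ln σ₀ ε₀ n = |log (eps ε₀ n)| / (4 * sig σ₀ n) := by
  rw [Ln, eps_succ_div_eps h, log_rpow (eps_pos h n), abs_mul,
    abs_of_pos (by norm_num : (0 : ℝ) < 1 / 4)]
  ring

lemma Ln_le {σ₀ ε₀ : ℝ} (hσ₀ : 0 < σ₀) (h : 0 < ε₀) (n : ℕ) :
    Ln σ₀ ε₀ n ≤ |log (eps ε₀ n)| / (2 * σ₀) := by
  rw [Ln_eq h]
  have := half_le_sig hσ₀.le n
  exact div_le_div_of_nonneg_left (abs_nonneg _) (by positivity) (by linarith)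

lemma one_le_Ln {σ₀ ε₀ : ℝ} (hσ₀ : 0 < σ₀) (h : 0 < ε₀) {n : ℕ}
    (hn : 4 * σ₀ ≤ |log (eps ε₀ n)|) : 1 ≤ Ln σ₀ ε₀ n := by
  have h₁ := half_le_sig hσ₀.le n
  have h₂ := sig_le hσ₀.le n
  rw [Ln_eq h, le_div_iff₀ (by linarith)]
  linarith

lemma neg_log_mProd_le_of_mem_An {m : ℕ → ℝ} {β₀ ε₀ : ℝ} {n : ℕ} {A : Finset ℕ}
    (hm : ∀ i, 0 < m i) (hβ₀ : 0 < β₀) (hε₀ : 0 < ε₀) (hn : n ≠ 0) (hA : A ∈ An m β₀ ε₀ n) :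
    -log (mProd m A) ≤ 2 * n ^ 2 * |log (eps ε₀ n)| / β₀ := by
  have hmA : 0 < mProd m A := prod_pos fun i _ => hm i
  have hA' : eps ε₀ n ^ (1 / 4 : ℝ) ≤ mProd m A ^ mun β₀ n := by
    rw [← eps_succ_div_eps hε₀]
    exact hA
  have h := log_le_log (rpow_pos_of_pos (eps_pos hε₀ n) _) hA'
  rw [log_rpow (eps_pos hε₀ n), log_rpow hmA, mun] at h
  have hn2 : (0 : ℝ) < n ^ 2 := by positivity
  have hscale : β₀ / (8 * n ^ 2) * log (mProd m A) * (8 * n ^ 2) = β₀ * log (mProd m A) := by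
    field_simp
  rw [le_div_iff₀ hβ₀]
  nlinarith [neg_abs_le (log (eps ε₀ n))]

lemma IsMassSeq.kappa_mul_sub_log_le {κ M : ℝ} {m : ℕ → ℝ} (hm : IsMassSeq κ M m) (i : ℕ) :
    κ * i - log M ≤ -log (m i) := by
  have hM : 0 < M := pos_of_mul_pos_left ((hm.pos i).trans_le (hm.decay i)) (exp_pos _).le
  have := log_le_log (hm.pos i) (hm.decay i)
  rw [log_mul hM.ne' (exp_pos _).ne', log_exp] at this
  linarith

lemma IsMassSeq.kappa_mul_sum_le {κ M : ℝ} {m : ℕ → ℝ} (hm : IsMassSeq κ M m) (A : Finset ℕ) :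
    κ * ∑ i ∈ A, (i : ℝ) ≤ -log (mProd m A) + #A * log M := by
  have := sum_le_sum fun i (_ : i ∈ A) => hm.kappa_mul_sub_log_le i
  rw [sum_sub_distrib, ← mul_sum, sum_const, nsmul_eq_mul, sum_neg_distrib,
    ← log_prod fun i _ => (hm.pos i).ne'] at this
  rw [mProd]
  linarith

lemma sum_range_card_le_sum (A : Finset ℕ) : ∑ i ∈ range #A, i ≤ ∑ i ∈ A, i := by
  have h := Finset.sum_range_le_sum (s := A.map Nat.castEmbedding) (c := 0) (by simp)
  simp only [card_map, sum_map, zero_add, Nat.castEmbedding_apply] at h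
  exact Int.ofNat_le.1 (by push_cast; exact h)

lemma card_sq_le_two_mul_sum_add_card (A : Finset ℕ) : #A ^ 2 ≤ 2 * ∑ i ∈ A, i + #A := by
  have hsq : #A ^ 2 = #A * (#A - 1) + #A := by
    rw [Nat.mul_sub_one, sq, Nat.sub_add_cancel (Nat.le_mul_self _)]
  rw [hsq, ← sum_range_id_mul_two]
  linarith [sum_range_card_le_sum A]

lemma sq_le_of_mul_sq_le {κ a R k : ℝ} (hκ : 0 < κ) (h : κ * k ^ 2 ≤ 2 * R + (2 * a + κ) * k) :
    k ^ 2 ≤ 4 * R / κ + ((2 * a + κ) / κ) ^ 2 := by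
  set b := (2 * a + κ) / κ
  have h' : k ^ 2 ≤ 2 * R / κ + b * k := by
    rw [show 2 * R / κ + b * k = (2 * R + (2 * a + κ) * k) / κ by simp only [b]; field_simp,
      le_div_iff₀ hκ]
    linarith
  have h4 : 4 * R / κ = 2 * (2 * R / κ) := by ring
  linarith [sq_nonneg (k - b)]

lemma exists_card_le_and_le_of_neg_log_mProd_le {κ M C : ℝ} (hκ : 0 < κ) (hM : 1 ≤ M)
    (hC : 0 ≤ C) :
    ∃ G E : ℝ, 0 ≤ G ∧ 0 ≤ E ∧ ∀ m, IsMassSeq κ M m → ∀ v, 1 ≤ v → ∀ A : Finset ℕ,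
      -log (mProd m A) ≤ C * v ^ 2 → (#A : ℝ) ≤ G * v ∧ ∀ i ∈ A, (i : ℝ) ≤ E * v ^ 2 := by
  set G := √(4 * C / κ + ((2 * log M + κ) / κ) ^ 2)
  have hG : 0 ≤ G := sqrt_nonneg _
  have hlogM := log_nonneg hM
  refine ⟨G, (C + G * log M) / κ, hG, by positivity, fun m hm v hv A hA => ?_⟩
  have hsum := hm.kappa_mul_sum_le A
  have hsq : (#A : ℝ) ^ 2 ≤ 2 * ∑ i ∈ A, (i : ℝ) + #A := by
    have h := (Nat.cast_le (α := ℝ)).2 (card_sq_le_two_mul_sum_add_card A)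
    push_cast at h
    exact h
  have hcard : (#A : ℝ) ≤ G * v := by
    have hk := sq_le_of_mul_sq_le hκ (R := C * v ^ 2) (a := log M) (k := #A)
      (by linarith [mul_le_mul_of_nonneg_left hsq hκ.le])
    have hb := mul_nonneg (sq_nonneg ((2 * log M + κ) / κ))
      (sub_nonneg.2 (one_le_pow₀ hv : (1 : ℝ) ≤ v ^ 2))
    refine (pow_le_pow_iff_left₀ (by positivity) (by positivity) two_ne_zero).1 ?_
    rw [mul_pow, sq_sqrt (by positivity)]
    calc (#A : ℝ) ^ 2 ≤ 4 * (C * v ^ 2) / κ + ((2 * log M + κ) / κ) ^ 2 := hk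
      _ ≤ _ := by
        rw [show 4 * (C * v ^ 2) / κ = 4 * C / κ * v ^ 2 by ring]
        linarith
  refine ⟨hcard, fun i hi => ?_⟩
  have hi : (i : ℝ) ≤ ∑ j ∈ A, (j : ℝ) := single_le_sum (fun j _ => Nat.cast_nonneg j) hi
  have hv2 : v ≤ v ^ 2 := by nlinarith
  rw [div_mul_eq_mul_div, le_div_iff₀ hκ]
  linarith [mul_le_mul_of_nonneg_left hi hκ.le, mul_le_mul_of_nonneg_right hcard hlogM,
    mul_le_mul_of_nonneg_left hv2 (mul_nonneg hG hlogM)]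

lemma natCast_le_of_five_fourths_pow_le {n : ℕ} {u : ℝ} (hu : 0 < u)
    (h : (5 / 4 : ℝ) ^ n ≤ u ^ 10) :
    (n : ℝ) ≤ 50 * u := by
  have h₁ : n * log (5 / 4) ≤ 10 * log u := by
    have := log_le_log (by positivity) h
    rw [log_pow, log_pow] at this
    exact_mod_cast this
  have h₂ : 1 / 5 ≤ log (5 / 4 : ℝ) := by
    have := one_sub_inv_le_log_of_pos (by norm_num : (0 : ℝ) < 5 / 4)
    norm_num at this ⊢
    linarith
  have h₃ := log_le_sub_one_of_pos hu
  nlinarith [(Nat.cast_nonneg n : (0 : ℝ) ≤ n)]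

def boundedFinsets (K N : ℕ) : Finset (Finset ℕ) :=
  (range (N + 1)).powerset.filter fun A => #A ≤ K

lemma mem_boundedFinsets {K N : ℕ} {A : Finset ℕ} :
    A ∈ boundedFinsets K N ↔ #A ≤ K ∧ ∀ i ∈ A, i ≤ N := by
  simp [boundedFinsets, subset_iff, and_comm]

lemma card_boundedFinsets_le (K N : ℕ) : #(boundedFinsets K N) ≤ (K + 1) * (N + 1) ^ K := by
  have hsub : boundedFinsets K N ⊆
      (range (K + 1)).biUnion fun k => powersetCard k (range (N + 1)) := by
    intro A hA
    simp only [boundedFinsets, mem_filter, mem_powerset] at hA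
    exact mem_biUnion.2 ⟨#A, mem_range.2 (Nat.lt_succ_of_le hA.2), mem_powersetCard.2 ⟨hA.1, rfl⟩⟩
  calc #(boundedFinsets K N)
      ≤ ∑ k ∈ range (K + 1), #(powersetCard k (range (N + 1))) :=
        (card_le_card hsub).trans card_biUnion_le
    _ ≤ ∑ k ∈ range (K + 1), (N + 1) ^ K := sum_le_sum fun k hk => by
        rw [card_powersetCard, card_range]
        exact (Nat.choose_le_pow _ _).trans
          (Nat.pow_le_pow_right N.succ_pos (Nat.lt_succ_iff.1 (mem_range.1 hk)))
    _ = (K + 1) * (N + 1) ^ K := by simp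

lemma sum_pow_le_of_subset_boundedFinsets {L : ℝ} (hL : 1 ≤ L) {K N : ℕ}
    {𝒮 : Finset (Finset ℕ)} (h : 𝒮 ⊆ boundedFinsets K N) :
    ∑ A ∈ 𝒮, L ^ (2 * #A + 1) ≤ (K + 1) * (N + 1) ^ K * L ^ (2 * K + 1) := by
  calc ∑ A ∈ 𝒮, L ^ (2 * #A + 1)
      ≤ ∑ A ∈ boundedFinsets K N, L ^ (2 * #A + 1) :=
        sum_le_sum_of_subset_of_nonneg h fun _ _ _ => by positivity
    _ ≤ ∑ A ∈ boundedFinsets K N, L ^ (2 * K + 1) := sum_le_sum fun A hA =>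
        pow_le_pow_right₀ hL (by have := (mem_boundedFinsets.1 hA).1; omega)
    _ ≤ (K + 1) * (N + 1) ^ K * L ^ (2 * K + 1) := by
        rw [sum_const, nsmul_eq_mul]
        gcongr
        exact_mod_cast card_boundedFinsets_le K N

lemma pow_le_exp_mul_of_le {y ℓ P : ℝ} {p : ℕ} (hy : 1 ≤ y) (hℓ : log y ≤ ℓ)
    (hP : (p : ℝ) ≤ P) :
    y ^ p ≤ exp (P * ℓ) := by
  have := log_nonneg hy
  calc y ^ p = exp (p * log y) := by rw [exp_nat_mul, exp_log (by positivity)]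
    _ ≤ exp (P * ℓ) := by gcongr; linarith

lemma log_mul_pow_le {B u : ℝ} (hB : 1 ≤ B) (hu : 1 ≤ u) (k : ℕ) :
    log (B * u ^ k) ≤ (log B + k) * u := by
  rw [log_mul (by positivity) (by positivity), log_pow]
  have := log_le_sub_one_of_pos (by positivity : 0 < u)
  nlinarith [log_nonneg hB, (Nat.cast_nonneg k : (0 : ℝ) ≤ k)]

lemma exists_sum_pow_le_exp {G E σ₀ : ℝ} (hG : 0 ≤ G) (hE : 0 ≤ E) (hσ₀ : 0 < σ₀) :
    ∃ D : ℝ, 1 ≤ D ∧ ∀ u, D ≤ u → ∀ L, 1 ≤ L → L ≤ u ^ 10 / (2 * σ₀) →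
      ∀ 𝒮 ⊆ boundedFinsets ⌊G * u ^ 6⌋₊ ⌊E * u ^ 12⌋₊,
        ∑ A ∈ 𝒮, L ^ (2 * #A + 1) ≤ exp (u ^ 8) := by
  set B := G + E + 1 / (2 * σ₀) + 1
  have : 0 < 1 / (2 * σ₀) := by positivity
  have hσB : 1 / (2 * σ₀) ≤ B := by linarith
  have hGB : G + 1 ≤ B := by linarith
  have hEB : E + 1 ≤ B := by linarith
  have hB : 1 ≤ B := by linarith
  have hlogB := log_nonneg hB
  refine ⟨(3 * G + 2) * (log B + 12), by nlinarith, fun u hu L hL₁ hL 𝒮 h𝒮 => ?_⟩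
  have hu₁ : 1 ≤ u := by nlinarith
  set K := ⌊G * u ^ 6⌋₊
  set N := ⌊E * u ^ 12⌋₊
  have hK : (K : ℝ) ≤ G * u ^ 6 := Nat.floor_le (by positivity)
  have hN : (N : ℝ) ≤ E * u ^ 12 := Nat.floor_le (by positivity)
  have h6 : u ^ 6 ≤ u ^ 12 := pow_le_pow_right₀ hu₁ (by norm_num)
  have h10 : u ^ 10 ≤ u ^ 12 := pow_le_pow_right₀ hu₁ (by norm_num)
  have h12 : 1 ≤ u ^ 12 := one_le_pow₀ hu₁
  have hu6 : 1 ≤ u ^ 6 := one_le_pow₀ hu₁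
  have hBu : 1 ≤ B * u ^ 12 := one_le_mul_of_one_le_of_one_le hB h12
  calc ∑ A ∈ 𝒮, L ^ (2 * #A + 1) ≤ (K + 1) * (N + 1) ^ K * L ^ (2 * K + 1) :=
        sum_pow_le_of_subset_boundedFinsets hL₁ h𝒮
    _ ≤ (B * u ^ 12) * (B * u ^ 12) ^ K * (B * u ^ 12) ^ (2 * K + 1) := by
        gcongr
        · nlinarith [mul_le_mul_of_nonneg_left h6 hG]
        · nlinarith [mul_le_mul_of_nonneg_left h6 hE]
        · calc L ≤ u ^ 10 / (2 * σ₀) := hL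
            _ = 1 / (2 * σ₀) * u ^ 10 := by ring
            _ ≤ B * u ^ 12 := by gcongr
    _ = (B * u ^ 12) ^ (3 * K + 2) := by ring
    _ ≤ exp (((3 * G + 2) * u ^ 6) * ((log B + 12) * u)) :=
        pow_le_exp_mul_of_le hBu (log_mul_pow_le hB hu₁ 12) (by push_cast; linarith)
    _ ≤ exp (u ^ 8) := by
        gcongr
        calc (3 * G + 2) * u ^ 6 * ((log B + 12) * u)
            = (3 * G + 2) * (log B + 12) * u ^ 7 := by ring
          _ ≤ u * u ^ 7 := by gcongr
          _ = u ^ 8 := by ring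

lemma exists_An_subset_boundedFinsets {κ M β₀ : ℝ} (hκ : 0 < κ) (hM : 1 ≤ M) (hβ₀ : 0 < β₀) :
    ∃ G E : ℝ, 0 ≤ G ∧ 0 ≤ E ∧ ∀ m, IsMassSeq κ M m → ∀ ε₀, 0 < ε₀ → 1 ≤ |log ε₀| →
      ∀ n, n ≠ 0 → ∀ u, 1 ≤ u → |log (eps ε₀ n)| = u ^ 10 →
        An m β₀ ε₀ n ⊆ boundedFinsets ⌊G * u ^ 6⌋₊ ⌊E * u ^ 12⌋₊ := by
  obtain ⟨G, E, hG, hE, hbound⟩ :=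
    exists_card_le_and_le_of_neg_log_mProd_le hκ hM (C := 5000 / β₀) (by positivity)
  refine ⟨G, E, hG, hE, fun m hm ε₀ hε₀ hlog n hn u hu ht A hA => ?_⟩
  have hpow : (5 / 4 : ℝ) ^ n ≤ u ^ 10 := by
    rw [← ht, abs_log_eps hε₀]
    exact le_mul_of_one_le_right (by positivity) hlog
  have hn2 : (n : ℝ) ^ 2 ≤ (50 * u) ^ 2 :=
    pow_le_pow_left₀ n.cast_nonneg (natCast_le_of_five_fourths_pow_le (by linarith) hpow) 2
  have hR : -log (mProd m A) ≤ 5000 / β₀ * (u ^ 6) ^ 2 := by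
    refine (neg_log_mProd_le_of_mem_An hm.pos hβ₀ hε₀ hn hA).trans ?_
    rw [ht, div_mul_eq_mul_div]
    refine div_le_div_of_nonneg_right ?_ hβ₀.le
    nlinarith [mul_le_mul_of_nonneg_right hn2 (by positivity : (0 : ℝ) ≤ u ^ 10)]
  obtain ⟨hcard, hmax⟩ := hbound m hm (u ^ 6) (one_le_pow₀ hu) A hR
  rw [← pow_mul] at hmax
  exact mem_boundedFinsets.2 ⟨Nat.le_floor hcard, fun i hi => Nat.le_floor (hmax i hi)⟩

lemma exists_le_and_eq_pow {D t : ℝ} {k : ℕ} (hD : 0 ≤ D) (hk : k ≠ 0) (h : D ^ k ≤ t) :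
    ∃ u, D ≤ u ∧ t = u ^ k := by
  have ht : 0 ≤ t := (pow_nonneg hD k).trans h
  refine ⟨t ^ (k⁻¹ : ℝ), ?_, (rpow_inv_natCast_pow ht hk).symm⟩
  rwa [← pow_le_pow_iff_left₀ hD (by positivity) hk, rpow_inv_natCast_pow ht hk]

theorem An_counting_estimate
    (κ M β₀ σ₀ : ℝ) (hκ : 0 < κ) (hM : 1 ≤ M)
    (hβ₀ : β₀ ∈ Set.Ioo (0 : ℝ) 1) (hσ₀ : 0 < σ₀) :
    ∃ εstar c : ℝ, εstar ∈ Set.Ioo (0 : ℝ) 1 ∧ 0 < c ∧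
      ∀ m : ℕ → ℝ, IsMassSeq κ M m →
      ∀ ε₀ : ℝ, ε₀ ∈ Set.Ioo (0 : ℝ) 1 → ε₀ ≤ εstar →
      ∀ n : ℕ, 1 ≤ n →
        ∃ hfin : (An m β₀ ε₀ n).Finite,
          ∑ A ∈ hfin.toFinset, Ln σ₀ ε₀ n ^ (2 * A.card + 1) ≤
            c * Real.exp (|Real.log (eps ε₀ n)| ^ (4 / 5 : ℝ)) := by
  obtain ⟨G, E, hG, hE, hAn⟩ := exists_An_subset_boundedFinsets hκ hM hβ₀.1
  obtain ⟨D, hD, hsum⟩ := exists_sum_pow_le_exp hG hE hσ₀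
  set Λ := max (4 * σ₀) (D ^ 10)
  have hΛ : 1 ≤ Λ := (one_le_pow₀ hD).trans (le_max_right _ _)
  refine ⟨exp (-Λ), 1, ⟨exp_pos _, exp_lt_one_iff.2 (by linarith)⟩, one_pos, ?_⟩
  rintro m hm ε₀ ⟨hε₀, -⟩ hεstar n hn
  have hΛε₀ : Λ ≤ |log ε₀| := by
    have := log_le_log hε₀ hεstar
    rw [log_exp] at this
    exact (le_neg.1 this).trans (neg_le_abs _)
  have hΛt : Λ ≤ |log (eps ε₀ n)| := by
    rw [abs_log_eps hε₀]
    exact hΛε₀.trans (le_mul_of_one_le_left (abs_nonneg _) (one_le_pow₀ (by norm_num)))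
  obtain ⟨u, hDu, ht⟩ := exists_le_and_eq_pow (by linarith) (by norm_num : 10 ≠ 0)
    ((le_max_right _ _).trans hΛt)
  have hsub := hAn m hm ε₀ hε₀ (hΛ.trans hΛε₀) n (by omega) u (hD.trans hDu) ht
  refine ⟨(boundedFinsets _ _).finite_toSet.subset hsub, ?_⟩
  calc _ ≤ exp (u ^ 8) :=
        hsum u hDu _ (one_le_Ln hσ₀ hε₀ ((le_max_left _ _).trans hΛt)) (ht ▸ Ln_le hσ₀ hε₀ n) _
          fun A hA => hsub ((Set.Finite.mem_toFinset _).1 hA)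
    _ = 1 * exp (|log (eps ε₀ n)| ^ (4 / 5 : ℝ)) := by
        rw [one_mul, ht, ← rpow_natCast u 10, ← rpow_mul (by linarith)]
        norm_num
end
end

section
/- Let 0 < ℓ ≤ 2, d ∈ (0,1), and let ξ ∈ ℝ^ℕ be a bounded sequence having covering constant C at dimension d. Fix n ≥ 1 and define q_n = min{ q ∈ ℕ, q ≥ 1 : L_n · q^{−1/d} ≤ ε_n^{1/12} }. Then there exists a finite set 𝓘 ⊆ ℕ with |𝓘| ≤ C·q_n (depending only on ξ, d and q_n, not on A or l below) such that: for every finite set A ⊆ ℕ, every integer vector l = (l_k)_{k∈A} and every integer λ with Σ_{k∈A}|l_k| + |λ| ≤ L_n, one has ∪_{j > max A} { ξ̃ ∈ Λ(ξ) : |Σ_{k∈A} l_k ξ̃_k + λ ξ̃_j| ≤ ε_n^{1/12} } ⊆ ( ∪_{max A < j ≤ q_n} { ξ̃ ∈ Λ(ξ) : |Σ_{k∈A} l_k ξ̃_k + λ ξ̃_j| ≤ ε_n^{1/12} } ) ∪ ( ∪_{i ∈ 𝓘} { ξ̃ ∈ Λ(ξ) : |Σ_{k∈A} l_k ξ̃_k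 + λ ξ̃_i| ≤ 7·ε_n^{1/12} } ). -/
open scoped ENNReal NNReal BigOperators Classical

noncomputable section

open MeasureTheory

/-- Half-width of the `n`-th interval of the Hilbert cube `Λ(ξ)`: `ℓ · n^{-1/d}`
(for `n ≥ 1`; the auxiliary coordinate `n = 0` is given half-width `ℓ`). -/
def cubeWidth (ℓ d : ℝ) (n : ℕ) : ℝ := ℓ * (max (n : ℝ) 1) ^ (-(1 / d))

/-- The `n`-th interval `[ξ_n − ℓ n^{-1/d}, ξ_n + ℓ n^{-1/d}]`. -/
def cubeBox (ξ : ℕ → ℝ) (ℓ d : ℝ) (n : ℕ) : Set ℝ :=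
  Set.Icc (ξ n - cubeWidth ℓ d n) (ξ n + cubeWidth ℓ d n)

/-- The Hilbert cube `Λ(ξ) = ∏_n [ξ_n − ℓ n^{-1/d}, ξ_n + ℓ n^{-1/d}]`. -/
def hilbertCube (ξ : ℕ → ℝ) (ℓ d : ℝ) : Set (ℕ → ℝ) :=
  {x | ∀ k : ℕ, x k ∈ cubeBox ξ ℓ d k}

/-- Normalized Lebesgue measure on the `n`-th interval of `Λ(ξ)`. -/
def factorMeasure (ξ : ℕ → ℝ) (ℓ d : ℝ) (n : ℕ) : Measure ℝ :=
  (ENNReal.ofReal (2 * cubeWidth ℓ d n))⁻¹ • (volume.restrict (cubeBox ξ ℓ d n))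

/-- `μ` is the product probability measure on `Λ(ξ)` (for the product σ-algebra on
`ℕ → ℝ`), characterized by its values on measurable cylinders. -/
def IsCubeMeasure (ξ : ℕ → ℝ) (ℓ d : ℝ) (μ : Measure (ℕ → ℝ)) : Prop :=
  IsProbabilityMeasure μ ∧
  ∀ (F : Finset ℕ) (B : ℕ → Set ℝ), (∀ k, MeasurableSet (B k)) →
    μ ((↑F : Set ℕ).pi B) = ∏ k ∈ F, factorMeasure ξ ℓ d k (B k)

/-- The resonant strip `ℛ^{(n)}_{A,l}(ξ) = {ξ̃ ∈ Λ(ξ) : |Σ_{j∈A} l_j ξ̃_j| ≤ ε_n^{1/12}}`. -/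
def resStrip (ξ : ℕ → ℝ) (ℓ d ε₀ : ℝ) (n : ℕ) (A : Finset ℕ) (l : ℕ → ℤ) :
    Set (ℕ → ℝ) :=
  {x | x ∈ hilbertCube ξ ℓ d ∧
    |∑ j ∈ A, (l j : ℝ) * x j| ≤ eps ε₀ n ^ (1 / 12 : ℝ)}

/-- `ξ` has covering constant `C` at dimension `d`: for every `q ≥ 1` the set
`{ξ_i : i ∈ ℕ}` can be covered by at most `C·q` closed intervals of length `2 q^{-1/d}`. -/
def HasCoveringConst (ξ : ℕ → ℝ) (d C : ℝ) : Prop :=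
  ∀ q : ℕ, 1 ≤ q → ∃ T : Finset ℝ, (T.card : ℝ) ≤ C * q ∧
    ∀ i : ℕ, ∃ c ∈ T, |ξ i - c| ≤ (q : ℝ) ^ (-(1 / d))

/-!
Cover `{ξ_i}` by at most `C q_n` intervals of radius `w = q_n^{-1/d}` and keep one index
`i ≥ q_n` from each interval that contains such an index. A far resonance at `j > q_n`
then has a representative `i` with `|ξ_i - ξ_j| ≤ 2w`; since the cube has half-width at
most `2w` beyond `q_n`, `|ξ̃_i - ξ̃_j| ≤ 6w`, and moving the `λ`-term from `j` to `i` costs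
at most `|λ| · 6w ≤ 6 L_n w ≤ 6 ε_n^{1/12}`.
-/

lemma exists_finset_representatives {ξ : ℕ → ℝ} {T : Finset ℝ} {r : ℝ}
    (hT : ∀ i, ∃ c ∈ T, |ξ i - c| ≤ r) (S : Set ℕ) :
    ∃ I : Finset ℕ, I.card ≤ T.card ∧ ∀ j ∈ S, ∃ i ∈ I, i ∈ S ∧ |ξ i - ξ j| ≤ 2 * r := by
  have hpick : ∀ c : ℝ, ∃ i : ℕ, (∃ j ∈ S, |ξ j - c| ≤ r) → i ∈ S ∧ |ξ i - c| ≤ r := by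
    intro c
    by_cases hc : ∃ j ∈ S, |ξ j - c| ≤ r
    · obtain ⟨i, hiS, hic⟩ := hc
      exact ⟨i, fun _ => ⟨hiS, hic⟩⟩
    · exact ⟨0, fun h => absurd h hc⟩
  choose f hf using hpick
  refine ⟨T.image f, Finset.card_image_le, fun j hjS => ?_⟩
  obtain ⟨c, hcT, hjc⟩ := hT j
  obtain ⟨hfS, hfc⟩ := hf c ⟨j, hjS, hjc⟩
  refine ⟨f c, Finset.mem_image_of_mem f hcT, hfS, ?_⟩
  calc |ξ (f c) - ξ j| ≤ |ξ (f c) - c| + |c - ξ j| := abs_sub_le _ _ _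
    _ ≤ 2 * r := by rw [abs_sub_comm c]; linarith

lemma abs_sub_le_cubeWidth_of_mem_hilbertCube {ξ x : ℕ → ℝ} {ℓ d : ℝ}
    (hx : x ∈ hilbertCube ξ ℓ d) (k : ℕ) : |x k - ξ k| ≤ cubeWidth ℓ d k :=
  abs_sub_le_iff.2 ⟨by linarith [(hx k).2], by linarith [(hx k).1]⟩

lemma cubeWidth_le_of_le {ℓ d : ℝ} (hℓ : ℓ ≤ 2) (hd : 0 < d) {q k : ℕ} (hq : 1 ≤ q)
    (hqk : q ≤ k) : cubeWidth ℓ d k ≤ 2 * (q : ℝ) ^ (-(1 / d)) := by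
  have hq' : (1 : ℝ) ≤ q := by exact_mod_cast hq
  have hqk' : (q : ℝ) ≤ k := by exact_mod_cast hqk
  rw [cubeWidth, max_eq_left (hq'.trans hqk')]
  calc ℓ * (k : ℝ) ^ (-(1 / d)) ≤ 2 * (k : ℝ) ^ (-(1 / d)) := by gcongr
    _ ≤ 2 * (q : ℝ) ^ (-(1 / d)) := mul_le_mul_of_nonneg_left
      (Real.rpow_le_rpow_of_nonpos (by linarith) hqk' (neg_nonpos.2 (one_div_nonneg.2 hd.le)))
      zero_le_two

lemma abs_sub_le_of_mem_hilbertCube {ξ x : ℕ → ℝ} {ℓ d : ℝ} (hℓ : ℓ ≤ 2) (hd : 0 < d)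
    (hx : x ∈ hilbertCube ξ ℓ d) {q i j : ℕ} (hq : 1 ≤ q) (hqi : q ≤ i) (hqj : q ≤ j)
    (hij : |ξ i - ξ j| ≤ 2 * (q : ℝ) ^ (-(1 / d))) :
    |x i - x j| ≤ 6 * (q : ℝ) ^ (-(1 / d)) := by
  have hi := (abs_sub_le_cubeWidth_of_mem_hilbertCube hx i).trans
    (cubeWidth_le_of_le hℓ hd hq hqi)
  have hj := (abs_sub_le_cubeWidth_of_mem_hilbertCube hx j).trans
    (cubeWidth_le_of_le hℓ hd hq hqj)
  calc |x i - x j| = |(x i - ξ i) + (ξ i - ξ j) + (ξ j - x j)| := by ring_nf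
    _ ≤ |x i - ξ i| + |ξ i - ξ j| + |ξ j - x j| := abs_add_three _ _ _
    _ ≤ 6 * (q : ℝ) ^ (-(1 / d)) := by rw [abs_sub_comm (ξ j)]; linarith

lemma abs_add_mul_le_of_abs_sub_le {s a b lam ε L δ : ℝ} (hres : |s + lam * b| ≤ ε)
    (hlam : |lam| ≤ L) (hab : |a - b| ≤ δ) : |s + lam * a| ≤ ε + L * δ := by
  have hmove : |lam * a - lam * b| ≤ L * δ := by
    rw [← mul_sub, abs_mul]
    exact mul_le_mul hlam hab (abs_nonneg _) ((abs_nonneg _).trans hlam)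
  calc |s + lam * a| = |(s + lam * b) + (lam * a - lam * b)| := by ring_nf
    _ ≤ |s + lam * b| + |lam * a - lam * b| := abs_add_le _ _
    _ ≤ ε + L * δ := add_le_add hres hmove

lemma abs_intCast_le_of_natAbs_add_le {A : Finset ℕ} {l : ℕ → ℤ} {lam : ℤ} {L : ℝ}
    (h : (((∑ k ∈ A, (l k).natAbs) + lam.natAbs : ℕ) : ℝ) ≤ L) : |(lam : ℝ)| ≤ L := by
  calc |(lam : ℝ)| = (lam.natAbs : ℝ) := by rw [Nat.cast_natAbs, Int.cast_abs]
    _ ≤ _ := by exact_mod_cast Nat.le_add_left _ _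
    _ ≤ L := h

theorem resonance_clustering_general
    (ℓ d : ℝ) (hℓ2 : ℓ ≤ 2) (hd : d ∈ Set.Ioo (0 : ℝ) 1)
    (ξ : ℕ → ℝ)
    (C : ℝ) (hcov : HasCoveringConst ξ d C)
    (σ₀ ε₀ : ℝ)
    (n : ℕ)
    (qn : ℕ)
    (hqn : IsLeast {q : ℕ | 1 ≤ q ∧
      Ln σ₀ ε₀ n * (q : ℝ) ^ (-(1 / d)) ≤ eps ε₀ n ^ (1 / 12 : ℝ)} qn) :
    ∃ I : Finset ℕ, (I.card : ℝ) ≤ C * qn ∧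
      ∀ (A : Finset ℕ) (l : ℕ → ℤ) (lam : ℤ),
        (((∑ k ∈ A, (l k).natAbs) + lam.natAbs : ℕ) : ℝ) ≤ Ln σ₀ ε₀ n →
        ∀ x ∈ hilbertCube ξ ℓ d,
        ∀ j : ℕ, (∀ k ∈ A, k < j) →
          |(∑ k ∈ A, (l k : ℝ) * x k) + (lam : ℝ) * x j| ≤ eps ε₀ n ^ (1 / 12 : ℝ) →
          (∃ j' : ℕ, (∀ k ∈ A, k < j') ∧ j' ≤ qn ∧
            |(∑ k ∈ A, (l k : ℝ) * x k) + (lam : ℝ) * x j'| ≤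
              eps ε₀ n ^ (1 / 12 : ℝ)) ∨
          (∃ i ∈ I,
            |(∑ k ∈ A, (l k : ℝ) * x k) + (lam : ℝ) * x i| ≤
              7 * eps ε₀ n ^ (1 / 12 : ℝ)) := by
  obtain ⟨⟨hq, hLw⟩, -⟩ := hqn
  obtain ⟨T, hTcard, hTcov⟩ := hcov qn hq
  obtain ⟨I, hIcard, hI⟩ := exists_finset_representatives hTcov {i | qn ≤ i}
  refine ⟨I, le_trans (by exact_mod_cast hIcard) hTcard, ?_⟩
  intro A l lam hL x hx j hAj hres
  rcases le_or_gt j qn with hjq | hqj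
  · exact Or.inl ⟨j, hAj, hjq, hres⟩
  obtain ⟨i, hiI, hqi, hij⟩ := hI j hqj.le
  have hxij := abs_sub_le_of_mem_hilbertCube hℓ2 hd.1 hx hq hqi hqj.le hij
  have hlam := abs_intCast_le_of_natAbs_add_le hL
  refine Or.inr ⟨i, hiI, ?_⟩
  calc _ ≤ eps ε₀ n ^ (1 / 12 : ℝ) + Ln σ₀ ε₀ n * (6 * (qn : ℝ) ^ (-(1 / d))) :=
        abs_add_mul_le_of_abs_sub_le hres hlam hxij
    _ ≤ 7 * eps ε₀ n ^ (1 / 12 : ℝ) := by linarith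

theorem resonance_clustering
    (ℓ d : ℝ) (hℓ0 : 0 < ℓ) (hℓ2 : ℓ ≤ 2) (hd : d ∈ Set.Ioo (0 : ℝ) 1)
    (ξ : ℕ → ℝ) (hbdd : ∃ B : ℝ, ∀ i, |ξ i| ≤ B)
    (C : ℝ) (hcov : HasCoveringConst ξ d C)
    (β₀ σ₀ ε₀ : ℝ) (hβ₀ : β₀ ∈ Set.Ioo (0 : ℝ) 1) (hσ₀ : 0 < σ₀)
    (hε₀ : ε₀ ∈ Set.Ioo (0 : ℝ) 1)
    (n : ℕ) (hn : 1 ≤ n)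
    (qn : ℕ)
    (hqn : IsLeast {q : ℕ | 1 ≤ q ∧
      Ln σ₀ ε₀ n * (q : ℝ) ^ (-(1 / d)) ≤ eps ε₀ n ^ (1 / 12 : ℝ)} qn) :
    ∃ I : Finset ℕ, (I.card : ℝ) ≤ C * qn ∧
      ∀ (A : Finset ℕ) (l : ℕ → ℤ) (lam : ℤ),
        (((∑ k ∈ A, (l k).natAbs) + lam.natAbs : ℕ) : ℝ) ≤ Ln σ₀ ε₀ n →
        ∀ x ∈ hilbertCube ξ ℓ d,
        ∀ j : ℕ, (∀ k ∈ A, k < j) →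
          |(∑ k ∈ A, (l k : ℝ) * x k) + (lam : ℝ) * x j| ≤ eps ε₀ n ^ (1 / 12 : ℝ) →
          (∃ j' : ℕ, (∀ k ∈ A, k < j') ∧ j' ≤ qn ∧
            |(∑ k ∈ A, (l k : ℝ) * x k) + (lam : ℝ) * x j'| ≤
              eps ε₀ n ^ (1 / 12 : ℝ)) ∨
          (∃ i ∈ I,
            |(∑ k ∈ A, (l k : ℝ) * x k) + (lam : ℝ) * x i| ≤
              7 * eps ε₀ n ^ (1 / 12 : ℝ)) :=
  resonance_clustering_general ℓ d hℓ2 hd ξ C hcov σ₀ ε₀ n qn hqn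
end
end
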